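/- arXiv:1112.0741 — 11 statements merged into one kernel-verified Lean document; each statement's English description precedes it below -/
import Mathlib

section
/- Let V and W be forms (homogeneous polynomials) on ℝⁿ, of possibly different degrees. If W is positive definite, and the function x ↦ ⟨∇W(x), ∇V(x)⟩ is positive definite (i.e., positive for all x ≠ 0), then V is positive definite. -/
/-!
Minimize `V` on the Euclidean sphere through `x`. At a minimizer `x₀` the Lagrange condition gives
`∇V(x₀) = c • x₀`. Euler's identity then turns the hypothesis into
`0 < ⟨∇W(x₀), ∇V(x₀)⟩ = c * dW * W(x₀)`, so `c > 0`, and again by Euler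
`dV * V(x₀) = ⟨x₀, ∇V(x₀)⟩ = c * ‖x₀‖² > 0`. Hence `V(x) ≥ V(x₀) > 0`.
-/

open MvPolynomial

section SumSq

variable {σ : Type*} [Fintype σ]

theorem isCompact_sum_sq_eq (r : ℝ) : IsCompact {y : σ → ℝ | ∑ i, y i ^ 2 = r} := by
  refine Metric.isCompact_of_isClosed_isBounded (isClosed_eq (by fun_prop) continuous_const)
    ((Metric.isBounded_closedBall (x := 0) (r := √r)).subset fun y hy ↦ ?_)
  rw [mem_closedBall_zero_iff, pi_norm_le_iff_of_nonneg (Real.sqrt_nonneg r)]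
  intro i
  rw [Real.norm_eq_abs]
  exact Real.abs_le_sqrt
    (hy ▸ Finset.single_le_sum (fun j _ ↦ sq_nonneg (y j)) (Finset.mem_univ i))

theorem sum_sq_pos_of_ne_zero {x : σ → ℝ} (hx : x ≠ 0) : 0 < ∑ i, x i ^ 2 := by
  obtain ⟨i, hi⟩ := Function.ne_iff.mp hx
  exact Finset.sum_pos' (fun j _ ↦ sq_nonneg (x j)) ⟨i, Finset.mem_univ i, sq_pos_iff.mpr hi⟩

end SumSq

namespace MvPolynomial

variable {σ : Type*} [Fintype σ]

theorem IsHomogeneous.sum_mul_eval_pderiv {R : Type*} [CommSemiring R] {p : MvPolynomial σ R}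
    {m : ℕ} (hp : p.IsHomogeneous m) (x : σ → R) :
    ∑ i, x i * eval x (pderiv i p) = m * eval x p := by
  simpa [nsmul_eq_mul] using congrArg (eval x) hp.sum_X_mul_pderiv

theorem hasStrictFDerivAt_eval (p : MvPolynomial σ ℝ) (x : σ → ℝ) :
    HasStrictFDerivAt (fun y ↦ eval y p)
      (∑ i, eval x (pderiv i p) • (ContinuousLinearMap.proj i : (σ → ℝ) →L[ℝ] ℝ)) x := by
  induction p using MvPolynomial.induction_on generalizing x with
  | C a => simpa using hasStrictFDerivAt_const a x
  | add p q hp hq =>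
    simp only [map_add, add_smul, Finset.sum_add_distrib]
    exact (hp x).add (hq x)
  | mul_X p i hp =>
    simp only [eval_mul, eval_X]
    refine ((hp x).mul (hasStrictFDerivAt_apply i x)).congr_fderiv ?_
    classical
    ext v
    simp [pderiv_X, Pi.single_apply, add_mul, Finset.sum_add_distrib, Finset.mul_sum, apply_ite,
      mul_assoc]

theorem exists_eval_pderiv_eq_mul_of_isLocalExtrOn {V : MvPolynomial σ ℝ} {x₀ : σ → ℝ}
    (hx₀ : x₀ ≠ 0) (h : IsLocalExtrOn (fun y ↦ eval y V) {y | ∑ i, y i ^ 2 = ∑ i, x₀ i ^ 2} x₀) :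
    ∃ c : ℝ, ∀ i, eval x₀ (pderiv i V) = c * x₀ i := by
  classical
  have hQ := hasStrictFDerivAt_eval (∑ i, X i ^ 2 : MvPolynomial σ ℝ) x₀
  simp only [map_sum, map_pow, eval_X] at hQ
  obtain ⟨a, b, hab, hsum⟩ :=
    h.exists_multipliers_of_hasStrictFDerivAt_1d hQ (hasStrictFDerivAt_eval V x₀)
  have hcoord : ∀ i, a * (2 * x₀ i) + b * eval x₀ (pderiv i V) = 0 := by
    intro i
    simpa [pderiv_X, Pi.single_apply, apply_ite] using DFunLike.congr_fun hsum (Pi.single i 1)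
  have hb : b ≠ 0 := by
    rintro rfl
    have ha : a ≠ 0 := by rintro rfl; exact hab rfl
    apply hx₀
    ext i
    simpa [ha] using hcoord i
  exact ⟨-2 * a / b, fun i ↦ by field_simp; linarith [hcoord i]⟩

theorem eval_pos_of_eval_pderiv_eq_mul {V W : MvPolynomial σ ℝ} {dV dW : ℕ}
    (hV : V.IsHomogeneous dV) (hW : W.IsHomogeneous dW) {x : σ → ℝ} {c : ℝ} (hx : x ≠ 0)
    (hc : ∀ i, eval x (pderiv i V) = c * x i) (hWx : 0 ≤ eval x W)
    (hinner : 0 < ∑ i, eval x (pderiv i W) * eval x (pderiv i V)) : 0 < eval x V := by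
  have hc_pos : 0 < c := by
    have : ∑ i, eval x (pderiv i W) * eval x (pderiv i V) = c * (dW * eval x W) := by
      rw [← hW.sum_mul_eval_pderiv, Finset.mul_sum]
      simp only [hc]
      exact Finset.sum_congr rfl fun i _ ↦ by ring
    exact pos_of_mul_pos_left (this ▸ hinner) (by positivity)
  have : (dV : ℝ) * eval x V = c * ∑ i, x i ^ 2 := by
    rw [← hV.sum_mul_eval_pderiv, Finset.mul_sum]
    simp only [hc]
    exact Finset.sum_congr rfl fun i _ ↦ by ring
  exact pos_of_mul_pos_right (this ▸ mul_pos hc_pos (sum_sq_pos_of_ne_zero hx)) dV.cast_nonneg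

end MvPolynomial

/-- Let `V` and `W` be forms (homogeneous polynomials) on `ℝⁿ`, of possibly
different degrees. If `W` is positive definite, and `x ↦ ⟨∇W(x), ∇V(x)⟩` is positive definite
(positive for all `x ≠ 0`), then `V` is positive definite. -/
theorem positivity_from_gradient_inner_product
    (n : ℕ) (V W : MvPolynomial (Fin n) ℝ) (dV dW : ℕ)
    (hVhom : V.IsHomogeneous dV) (hWhom : W.IsHomogeneous dW)
    (hWpos : ∀ x : Fin n → ℝ, x ≠ 0 → 0 < eval x W)
    (hinner : ∀ x : Fin n → ℝ, x ≠ 0 →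
      0 < ∑ i : Fin n, eval x (pderiv i W) * eval x (pderiv i V)) :
    ∀ x : Fin n → ℝ, x ≠ 0 → 0 < eval x V := by
  intro x hx
  obtain ⟨x₀, hx₀S : ∑ i, x₀ i ^ 2 = ∑ i, x i ^ 2, hmin⟩ :=
    (isCompact_sum_sq_eq _).exists_isMinOn ⟨x, rfl⟩ (continuous_eval V).continuousOn
  have hx₀ : x₀ ≠ 0 := by
    rintro rfl
    exact (sum_sq_pos_of_ne_zero hx).ne (by simpa using hx₀S)
  obtain ⟨c, hc⟩ := exists_eval_pderiv_eq_mul_of_isLocalExtrOn hx₀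
    (by rw [hx₀S]; exact hmin.isExtr.localize)
  have hVx₀ : 0 < eval x₀ V :=
    eval_pos_of_eval_pderiv_eq_mul hVhom hWhom hx₀ hc (hWpos x₀ hx₀).le (hinner x₀ hx₀)
  exact hVx₀.trans_le (hmin rfl)
end

section
/- Let V be a form of degree 4 on ℝⁿ. Suppose that for every initial condition x₀ ∈ ℝⁿ there exists a differentiable curve x : [0,∞) → ℝⁿ with x(0) = x₀, x'(t) = −∇V(x(t)) for all t ≥ 0, and x(t) → 0 as t → ∞. Then V is positive definite. -/
open MvPolynomial Filter Set Topology

/-!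
Along a solution `x` of `ẋ = -∇V(x)` the value `V(x(t))` decreases at rate `‖∇V(x(t))‖²` and tends
to `V(0) = 0`, so `V(x₀) ≥ 0`. If `V(x₀) = 0`, then `V(x(t))` stays `0`, so the gradient vanishes
along the curve; the curve is then stationary at `x₀`, and its limit `0` equals `x₀`.
-/

theorem HasDerivAt.eq_zero_of_eqOn_Ici {f : ℝ → ℝ} {f' t : ℝ} (hf : HasDerivAt f f' t)
    (hconst : EqOn f (fun _ => f t) (Ici t)) : f' = 0 :=
  (uniqueDiffOn_Ici t t self_mem_Ici).eq_deriv _ hf.hasDerivWithinAt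
    ((hasDerivWithinAt_const t _ (f t)).congr hconst rfl)

namespace MvPolynomial

variable {σ : Type*} [Fintype σ]

theorem hasDerivAt_eval_comp {𝕜 : Type*} [NontriviallyNormedField 𝕜] (p : MvPolynomial σ 𝕜)
    {x : 𝕜 → σ → 𝕜} {v : σ → 𝕜} {t : 𝕜} (hx : HasDerivAt x v t) :
    HasDerivAt (fun s => eval (x s) p) (∑ i, v i * eval (x t) (pderiv i p)) t := by
  classical
  induction p using MvPolynomial.induction_on with
  | C a => simpa using hasDerivAt_const t a
  | add p q hp hq => simpa [mul_add, Finset.sum_add_distrib] using hp.fun_add hq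
  | mul_X p i hp =>
    have hprod := hp.fun_mul (hasDerivAt_pi.1 hx i)
    have hsum : ∑ j, v j * eval (x t) (pderiv j (p * X i)) =
        (∑ j, v j * eval (x t) (pderiv j p)) * x t i + eval (x t) p * v i := by
      simp only [pderiv_mul, pderiv_X, map_add, map_mul, eval_X, mul_add, Finset.sum_add_distrib,
        Finset.sum_mul]
      congr 1
      · exact Finset.sum_congr rfl fun j _ => by ring
      · rw [Finset.sum_eq_single i (fun j _ hj => by simp [hj]) (by simp)]
        simp [mul_comm]
    rw [hsum]
    simpa using hprod

def IsGradientFlowLine (V : MvPolynomial σ ℝ) (x : ℝ → σ → ℝ) : Prop :=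
  ∀ t, 0 ≤ t → HasDerivAt x (fun i => -eval (x t) (pderiv i V)) t

namespace IsGradientFlowLine

variable {V : MvPolynomial σ ℝ} {x : ℝ → σ → ℝ}

theorem hasDerivAt_eval (hx : IsGradientFlowLine V x) {t : ℝ} (ht : 0 ≤ t) :
    HasDerivAt (fun s => eval (x s) V) (-∑ i, eval (x t) (pderiv i V) ^ 2) t := by
  simpa [sq, Finset.sum_neg_distrib] using V.hasDerivAt_eval_comp (hx t ht)

theorem antitoneOn_eval (hx : IsGradientFlowLine V x) :
    AntitoneOn (fun t => eval (x t) V) (Ici 0) :=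
  antitoneOn_of_hasDerivWithinAt_nonpos (convex_Ici 0)
    (fun _ ht => (hx.hasDerivAt_eval ht).continuousAt.continuousWithinAt)
    (fun _ ht => (hx.hasDerivAt_eval (interior_subset ht)).hasDerivWithinAt)
    (fun _ _ => neg_nonpos.2 (Finset.sum_nonneg fun _ _ => sq_nonneg _))

theorem eval_le_eval_of_tendsto (hx : IsGradientFlowLine V x) {y : σ → ℝ}
    (hlim : Tendsto x atTop (𝓝 y)) {t : ℝ} (ht : 0 ≤ t) : eval y V ≤ eval (x t) V := by
  refine le_of_tendsto (((continuous_eval V).tendsto y).comp hlim) ?_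
  filter_upwards [eventually_ge_atTop t] with s hs
  exact hx.antitoneOn_eval ht (ht.trans hs) hs

theorem eval_pderiv_eq_zero (hx : IsGradientFlowLine V x) {t : ℝ} (ht : 0 ≤ t)
    (hconst : EqOn (fun s => eval (x s) V) (fun _ => eval (x t) V) (Ici t)) (i : σ) :
    eval (x t) (pderiv i V) = 0 := by
  have hsum : ∑ j, eval (x t) (pderiv j V) ^ 2 = 0 :=
    neg_eq_zero.1 ((hx.hasDerivAt_eval ht).eq_zero_of_eqOn_Ici hconst)
  exact pow_eq_zero_iff two_ne_zero |>.1 <|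
    (Finset.sum_eq_zero_iff_of_nonneg fun j _ => sq_nonneg _).1 hsum i (Finset.mem_univ i)

theorem eq_of_eval_eq (hx : IsGradientFlowLine V x)
    (hconst : ∀ t, 0 ≤ t → eval (x t) V = eval (x 0) V) {t : ℝ} (ht : 0 ≤ t) : x t = x 0 := by
  refine constant_of_has_deriv_right_zero (fun s hs => (hx s hs.1).continuousAt.continuousWithinAt)
    (fun s hs => ?_) t ⟨ht, le_rfl⟩
  have hgrad : (fun i => -eval (x s) (pderiv i V)) = 0 := by
    ext i
    simp [hx.eval_pderiv_eq_zero hs.1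
      (fun r hr => (hconst r (hs.1.trans hr)).trans (hconst s hs.1).symm) i]
  simpa [hgrad] using (hx s hs.1).hasDerivWithinAt (s := Ici s)

end IsGradientFlowLine

end MvPolynomial

/-- Let `V` be a quartic form on `ℝⁿ`. Suppose that for every initial condition
`x₀` there is a differentiable curve `x` on `[0, ∞)` with `x 0 = x₀`, `x'(t) = -∇V(x t)` for all
`t ≥ 0`, and `x(t) → 0` as `t → ∞` (i.e. the cubic gradient vector field `ẋ = -∇V(x)` is
globally asymptotically stable). Then `V` is positive definite. -/
theorem positive_definite_of_gradient_flow_GAS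
    (n : ℕ) (V : MvPolynomial (Fin n) ℝ) (hVhom : V.IsHomogeneous 4)
    (hGAS : ∀ x₀ : Fin n → ℝ, ∃ x : ℝ → Fin n → ℝ, x 0 = x₀ ∧
      (∀ t : ℝ, 0 ≤ t → HasDerivAt x (fun i => -eval (x t) (pderiv i V)) t) ∧
      Tendsto x atTop (nhds 0)) :
    ∀ x : Fin n → ℝ, x ≠ 0 → 0 < eval x V := by
  intro x₀ hx₀
  obtain ⟨x, rfl, hflow, hlim⟩ := hGAS x₀
  replace hflow : IsGradientFlowLine V x := hflow
  have hV0 : eval 0 V = 0 := by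
    rw [eval_zero]
    exact hVhom.coeff_eq_zero (by simp)
  have hnonneg : ∀ t, 0 ≤ t → 0 ≤ eval (x t) V := fun t ht =>
    hV0 ▸ hflow.eval_le_eval_of_tendsto hlim ht
  refine (hnonneg 0 le_rfl).lt_of_ne fun hzero => hx₀ ?_
  have hconst : ∀ t, 0 ≤ t → eval (x t) V = eval (x 0) V := fun t ht =>
    le_antisymm (hflow.antitoneOn_eval self_mem_Ici ht ht) (hzero ▸ hnonneg t ht)
  refine tendsto_nhds_unique (tendsto_const_nhds.congr' ?_) hlim
  filter_upwards [eventually_ge_atTop 0] with t ht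
  exact (hflow.eq_of_eval_eq hconst ht).symm
end

section
/- Let V be a positive definite form of degree 4 on ℝⁿ. Then every differentiable curve x : [0,∞) → ℝⁿ satisfying x'(t) = −∇V(x(t)) for all t ≥ 0 converges to the origin: x(t) → 0 as t → ∞. -/
/-! By Euler's identity `⟪x, ∇V x⟫ = 4 V x`, the squared Euclidean norm is a Lyapunov
function: along the flow `(‖x‖²)' = -8 V x ≤ -8 m ‖x‖⁴`, where `m > 0` is the minimum of `V`
on the unit sphere. A nonnegative function with `f' ≤ -c f²` for some `c > 0` tends to `0`. -/

open MvPolynomial Filter Topology Set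
open scoped RealInnerProductSpace

namespace MvPolynomial

variable {σ R : Type*} [Fintype σ] [CommSemiring R] {φ : MvPolynomial σ R} {d : ℕ}

theorem IsHomogeneous.eval_smul (h : φ.IsHomogeneous d) (r : R) (y : σ → R) :
    eval (r • y) φ = r ^ d * eval y φ := by
  rw [eval_eq', eval_eq', Finset.mul_sum]
  refine Finset.sum_congr rfl fun c hc => ?_
  have hdeg : ∑ i, c i = d := by
    simpa [Finsupp.weight_apply, Finsupp.sum_fintype] using h (mem_support_iff.1 hc)
  simp only [Pi.smul_apply, smul_eq_mul, mul_pow, Finset.prod_mul_distrib,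
    Finset.prod_pow_eq_pow_sum, hdeg]
  ring

theorem IsHomogeneous.sum_mul_eval_pderiv_s5 (h : φ.IsHomogeneous d) (y : σ → R) :
    ∑ i, y i * eval y (pderiv i φ) = d * eval y φ := by
  simpa using congrArg (eval y) h.sum_X_mul_pderiv

end MvPolynomial

theorem exists_pos_mul_norm_pow_le {E : Type*} [NormedAddCommGroup E] [NormedSpace ℝ E]
    [ProperSpace E] [Nontrivial E] {f : E → ℝ} {d : ℕ} (hf : Continuous f)
    (hhom : ∀ r : ℝ, 0 ≤ r → ∀ y, f (r • y) = r ^ d * f y) (hpos : ∀ y, y ≠ 0 → 0 < f y) :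
    ∃ m > 0, ∀ y, m * ‖y‖ ^ d ≤ f y := by
  obtain ⟨u₀, hu₀, hmin⟩ := (isCompact_sphere (0 : E) 1).exists_isMinOn
    (NormedSpace.sphere_nonempty.2 zero_le_one) hf.continuousOn
  refine ⟨f u₀, hpos u₀ (ne_zero_of_mem_unit_sphere ⟨u₀, hu₀⟩), fun y => ?_⟩
  obtain ⟨u, hu, hyu⟩ : ∃ u ∈ Metric.sphere (0 : E) 1, y = ‖y‖ • u := by
    rcases eq_or_ne y 0 with rfl | hy
    · exact ⟨u₀, hu₀, by simp⟩
    · exact ⟨‖y‖⁻¹ • y, by simp [norm_smul, hy], by simp [smul_smul, hy]⟩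
  rw [hyu, hhom _ (norm_nonneg y), norm_smul, norm_norm, mem_sphere_zero_iff_norm.1 hu, mul_one,
    mul_comm]
  exact mul_le_mul_of_nonneg_left (hmin hu) (by positivity)

theorem antitoneOn_Ici_of_hasDerivAt_nonpos {f f' : ℝ → ℝ} {a : ℝ}
    (hf : ∀ t, a ≤ t → HasDerivAt f (f' t) t) (hf' : ∀ t, a ≤ t → f' t ≤ 0) :
    AntitoneOn f (Ici a) := by
  refine antitoneOn_of_deriv_nonpos (convex_Ici a)
    (fun t ht => (hf t ht).continuousAt.continuousWithinAt) (fun t ht => ?_) fun t ht => ?_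
  · rw [interior_Ici] at ht
    exact (hf t ht.le).differentiableAt.differentiableWithinAt
  · rw [interior_Ici] at ht
    rw [(hf t ht.le).deriv]
    exact hf' t ht.le

theorem tendsto_zero_of_hasDerivAt_le_neg_mul_pow {f f' : ℝ → ℝ} {c : ℝ} {k : ℕ} (hc : 0 < c)
    (hf : ∀ t, 0 ≤ t → HasDerivAt f (f' t) t) (hf' : ∀ t, 0 ≤ t → f' t ≤ -c * f t ^ k)
    (hf₀ : ∀ t, 0 ≤ t → 0 ≤ f t) : Tendsto f atTop (𝓝 0) := by
  have hanti : AntitoneOn f (Ici 0) := antitoneOn_Ici_of_hasDerivAt_nonpos hf fun t ht =>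
    (hf' t ht).trans (by nlinarith [pow_nonneg (hf₀ t ht) k])
  refine Metric.tendsto_atTop.2 fun ε hε => ?_
  obtain ⟨T, hT, hfT⟩ : ∃ T, 0 ≤ T ∧ f T < ε := by
    by_contra! hge
    set δ := c * ε ^ k
    have hδ : 0 < δ := by positivity
    have hlin : AntitoneOn (fun t => f t + δ * t) (Ici 0) :=
      antitoneOn_Ici_of_hasDerivAt_nonpos
        (fun t ht => (hf t ht).add ((hasDerivAt_id t).const_mul δ)) fun t ht => by
          have := pow_le_pow_left₀ hε.le (hge t ht) k
          nlinarith [hf' t ht]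
    have hT : 0 ≤ f 0 / δ + 1 := add_nonneg (div_nonneg (hf₀ 0 le_rfl) hδ.le) zero_le_one
    have hdrop : f (f 0 / δ + 1) + δ * (f 0 / δ + 1) ≤ f 0 := by
      simpa using hlin self_mem_Ici hT hT
    rw [mul_add, mul_div_cancel₀ _ hδ.ne'] at hdrop
    linarith [hf₀ _ hT]
  refine ⟨T, fun t ht => ?_⟩
  rw [Real.dist_eq, sub_zero, abs_of_nonneg (hf₀ t (hT.trans ht))]
  exact (hanti hT (hT.trans ht) ht).trans_lt hfT

theorem tendsto_zero_of_inner_hasDerivAt_le {E : Type*} [NormedAddCommGroup E]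
    [InnerProductSpace ℝ E] {y y' : ℝ → E} {c : ℝ} {k : ℕ} (hc : 0 < c)
    (hy : ∀ t, 0 ≤ t → HasDerivAt y (y' t) t)
    (hdecay : ∀ t, 0 ≤ t → ⟪y t, y' t⟫ ≤ -c * (‖y t‖ ^ 2) ^ k) :
    Tendsto y atTop (𝓝 0) := by
  have hsq : Tendsto (fun t => ‖y t‖ ^ 2) atTop (𝓝 0) :=
    tendsto_zero_of_hasDerivAt_le_neg_mul_pow (mul_pos two_pos hc)
      (fun t ht => (hy t ht).norm_sq) (fun t ht => by linarith [hdecay t ht])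
      fun t _ => by positivity
  refine tendsto_zero_iff_norm_tendsto_zero.2 ?_
  simpa [Real.sqrt_sq (norm_nonneg _)] using hsq.sqrt

/-- Let `V` be a positive definite quartic form on `ℝⁿ`. Then every
differentiable curve `x : [0, ∞) → ℝⁿ` satisfying `x'(t) = -∇V(x t)` for all `t ≥ 0` converges
to the origin as `t → ∞` (asymptotic stability of the cubic vector field `ẋ = -∇V(x)`). -/
theorem gradient_flow_converges_of_positive_definite_quartic
    (n : ℕ) (V : MvPolynomial (Fin n) ℝ) (hVhom : V.IsHomogeneous 4)
    (hVpos : ∀ x : Fin n → ℝ, x ≠ 0 → 0 < eval x V) :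
    ∀ x : ℝ → Fin n → ℝ,
      (∀ t : ℝ, 0 ≤ t → HasDerivAt x (fun i => -eval (x t) (pderiv i V)) t) →
      Tendsto x atTop (nhds 0) := by
  intro x hx
  rcases subsingleton_or_nontrivial (Fin n → ℝ) with _ | _
  · exact tendsto_const_nhds.congr fun t => Subsingleton.elim _ _
  obtain ⟨m, hm, hVm⟩ := exists_pos_mul_norm_pow_le (E := EuclideanSpace ℝ (Fin n))
    (f := fun y => eval y.ofLp V) ((continuous_eval V).comp (PiLp.continuous_ofLp 2 _))
    (fun r _ y => hVhom.eval_smul r y.ofLp) fun y hy => hVpos _ (by simpa using hy)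
  have hdecay : ∀ t, 0 ≤ t → ⟪(WithLp.toLp 2 (x t) : EuclideanSpace ℝ (Fin n)),
      WithLp.toLp 2 fun i => -eval (x t) (pderiv i V)⟫ ≤
        -(4 * m) * (‖WithLp.toLp 2 (x t)‖ ^ 2) ^ 2 := fun t _ =>
    calc _ = -∑ i, x t i * eval (x t) (pderiv i V) := by
          simp [PiLp.inner_apply, ← Finset.sum_neg_distrib, mul_comm]
      _ = -(4 * eval (x t) V) := by rw [hVhom.sum_mul_eval_pderiv_s5]; norm_num
      _ ≤ _ := by
          have := hVm (WithLp.toLp 2 (x t))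
          simp only [← pow_mul, Nat.reduceMul] at this ⊢
          linarith
  have hlim := tendsto_zero_of_inner_hasDerivAt_le (mul_pos four_pos hm)
    (fun t ht => (PiLp.hasFDerivAt_toLp 2 (x t)).comp_hasDerivAt t (hx t ht)) hdecay
  exact ((PiLp.continuous_ofLp 2 _).tendsto 0).comp hlim
end

section
/- Let λ > 0 be a real number and define the vector field f₀ : ℝ² → ℝ² by f₀(x,y) = (−2λy(x²+y²) − 2y(2x²+y²), 4λx(x²+y²) + 2x(2x²+y²)). Then the function V(x,y) = (2x²+y²)^λ (x²+y²) satisfies ⟨∇V(x,y), f₀(x,y)⟩ = 0 for all (x,y) ≠ (0,0); that is, V is constant along trajectories of ẋ = f₀(x) (the origin is a center). -/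
open RealInnerProductSpace

/-!
Writing `u = 2x² + y²` and `r = x² + y²`, we have `dV = u^(λ-1) (λ r du + u dr)`, and along `f₀`
one computes `du(f₀) = -4xyu` and `dr(f₀) = 4λxyr`, so the two terms cancel. Away from the origin
`u > 0`, so `u^λ` is differentiable there.
-/

theorem inner_gradient_rpow_mul {E : Type*} [NormedAddCommGroup E] [InnerProductSpace ℝ E]
    [CompleteSpace E] {u r : E → ℝ} {u' r' : StrongDual ℝ E} {p : E}
    (hu : HasFDerivAt u u' p) (hr : HasFDerivAt r r' p) (hp : u p ≠ 0) (lam : ℝ) (w : E) :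
    ⟪gradient (fun q => u q ^ lam * r q) p, w⟫ =
      u p ^ (lam - 1) * (lam * r p * u' w + u p * r' w) := by
  have hV : HasFDerivAt (fun q => u q ^ lam * r q) _ p := (hu.rpow_const (Or.inl hp)).mul hr
  rw [inner_gradient_left, hV.fderiv, Real.rpow_sub_one hp]
  simp only [add_apply, smul_apply, smul_eq_mul]
  field_simp
  ring

theorem EuclideanSpace.hasFDerivAt_apply_sq {ι : Type*} [Fintype ι] (i : ι)
    (p : EuclideanSpace ℝ ι) :
    HasFDerivAt (fun q : EuclideanSpace ℝ ι => q i ^ 2)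
      ((2 * p i) • EuclideanSpace.proj (𝕜 := ℝ) i) p := by
  refine ((hasDerivAt_pow 2 (p i)).comp_hasFDerivAt p
    (EuclideanSpace.proj (𝕜 := ℝ) i).hasFDerivAt).congr_fderiv ?_
  norm_num

theorem EuclideanSpace.sq_apply_zero_add_sq_apply_one_pos {p : EuclideanSpace ℝ (Fin 2)}
    (hp : p ≠ 0) : 0 < p 0 ^ 2 + p 1 ^ 2 := by
  simpa [EuclideanSpace.real_norm_sq_eq, Fin.sum_univ_two] using pow_pos (norm_pos_iff.2 hp) 2

theorem center_first_integral_bacciotti_rosier_general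
    (lam : ℝ)
    (f₀ : EuclideanSpace ℝ (Fin 2) → EuclideanSpace ℝ (Fin 2))
    (hf₀1 : ∀ p : EuclideanSpace ℝ (Fin 2),
      f₀ p 0 = -2*lam*(p 1)*((p 0)^2+(p 1)^2) - 2*(p 1)*(2*(p 0)^2+(p 1)^2))
    (hf₀2 : ∀ p : EuclideanSpace ℝ (Fin 2),
      f₀ p 1 = 4*lam*(p 0)*((p 0)^2+(p 1)^2) + 2*(p 0)*(2*(p 0)^2+(p 1)^2))
    (V : EuclideanSpace ℝ (Fin 2) → ℝ)
    (hV : ∀ p : EuclideanSpace ℝ (Fin 2),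
      V p = (2*(p 0)^2+(p 1)^2) ^ lam * ((p 0)^2+(p 1)^2)) :
    ∀ p : EuclideanSpace ℝ (Fin 2), p ≠ 0 → ⟪gradient V p, f₀ p⟫ = 0 := by
  intro p hp
  have hsq0 := EuclideanSpace.hasFDerivAt_apply_sq (0 : Fin 2) p
  have hsq1 := EuclideanSpace.hasFDerivAt_apply_sq (1 : Fin 2) p
  have hu_pos : 0 < 2 * p 0 ^ 2 + p 1 ^ 2 := by
    nlinarith [EuclideanSpace.sq_apply_zero_add_sq_apply_one_pos hp, sq_nonneg (p 0)]
  have hu : HasFDerivAt (fun q : EuclideanSpace ℝ (Fin 2) => 2 * q 0 ^ 2 + q 1 ^ 2) _ p :=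
    (hsq0.const_mul 2).add hsq1
  have hr : HasFDerivAt (fun q : EuclideanSpace ℝ (Fin 2) => q 0 ^ 2 + q 1 ^ 2) _ p :=
    hsq0.add hsq1
  rw [show V = _ from funext hV, inner_gradient_rpow_mul hu hr hu_pos.ne']
  simp only [add_apply, smul_apply, smul_eq_mul, PiLp.proj_apply, hf₀1, hf₀2]
  ring

/-- For `λ > 0`, the vector field
`f₀(x,y) = (−2λy(x²+y²) − 2y(2x²+y²), 4λx(x²+y²) + 2x(2x²+y²))` admits
`V(x,y) = (2x²+y²)^λ (x²+y²)` as a first integral: `⟨∇V(x,y), f₀(x,y)⟩ = 0` for all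
`(x,y) ≠ (0,0)`, i.e. the origin is a center. -/
theorem center_first_integral_bacciotti_rosier
    (lam : ℝ) (hlam : 0 < lam)
    (f₀ : EuclideanSpace ℝ (Fin 2) → EuclideanSpace ℝ (Fin 2))
    (hf₀1 : ∀ p : EuclideanSpace ℝ (Fin 2),
      f₀ p 0 = -2*lam*(p 1)*((p 0)^2+(p 1)^2) - 2*(p 1)*(2*(p 0)^2+(p 1)^2))
    (hf₀2 : ∀ p : EuclideanSpace ℝ (Fin 2),
      f₀ p 1 = 4*lam*(p 0)*((p 0)^2+(p 1)^2) + 2*(p 0)*(2*(p 0)^2+(p 1)^2))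
    (V : EuclideanSpace ℝ (Fin 2) → ℝ)
    (hV : ∀ p : EuclideanSpace ℝ (Fin 2),
      V p = (2*(p 0)^2+(p 1)^2) ^ lam * ((p 0)^2+(p 1)^2)) :
    ∀ p : EuclideanSpace ℝ (Fin 2), p ≠ 0 → ⟪gradient V p, f₀ p⟫ = 0 :=
  center_first_integral_bacciotti_rosier_general lam f₀ hf₀1 hf₀2 V hV
end

section
/- Let λ > 0 be an irrational real number and define the vector field f₀ : ℝ² → ℝ² by f₀(x,y) = (−2λy(x²+y²) − 2y(2x²+y²), 4λx(x²+y²) + 2x(2x²+y²)). Then there exists no nonconstant polynomial V ∈ ℝ[x,y] satisfying (∂V/∂x)·f₀₁ + (∂V/∂y)·f₀₂ = 0 identically, where f₀ = (f₀₁, f₀₂). -/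
/-!
With `r = x² + y²` and `s = 2x² + y²` one computes `f₀ · ∇r = 4λxy · r` and
`f₀ · ∇s = -4xy · s`, so `r s^λ` is a first integral, which is not polynomial when `λ`
is irrational. Since `f₀` is equivariant under the reflections `(x, y) ↦ (±x, ±y)`, the
product `W` of the four reflections of a polynomial first integral `V` is again a first
integral; it is even in `x` and in `y`, hence a polynomial `Q(r, s)`. In the coordinates
`(r, s)` the field is `4xy` times the Euler derivation `λ r ∂_r - s ∂_s`, which multiplies
`r^a s^b` by `λ a - b ≠ 0` unless `a = b = 0`. So `Q`, hence `W`, is constant, and `V`, a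
divisor of `W`, is constant.
-/

open MvPolynomial

namespace MvPolynomial

section ScaleVars

variable {R σ : Type*} [CommSemiring R]

noncomputable def scaleVars (c : σ → R) : MvPolynomial σ R →ₐ[R] MvPolynomial σ R :=
  aeval fun i => C (c i) * X i

theorem scaleVars_monomial (c : σ → R) (n : σ →₀ ℕ) (a : R) :
    scaleVars c (monomial n a) = monomial n ((n.prod fun i k => c i ^ k) * a) := by
  simp only [scaleVars, aeval_monomial, mul_pow, Finsupp.prod_mul, ← C_pow, algebraMap_eq]
  rw [← map_finsuppProd C, monomial_eq, C_mul]
  ring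

theorem coeff_scaleVars (c : σ → R) (p : MvPolynomial σ R) (m : σ →₀ ℕ) :
    coeff m (scaleVars c p) = (m.prod fun i k => c i ^ k) * coeff m p := by
  classical
  induction p using induction_on' with
  | monomial n a =>
    rw [scaleVars_monomial, coeff_monomial, coeff_monomial]
    split_ifs with h <;> simp [h]
  | add p q hp hq => rw [map_add, coeff_add, coeff_add, hp, hq, mul_add]

theorem scaleVars_scaleVars (c d : σ → R) (p : MvPolynomial σ R) :
    scaleVars c (scaleVars d p) = scaleVars (c * d) p := by
  ext m
  simp only [coeff_scaleVars, Pi.mul_apply, mul_pow, Finsupp.prod_mul]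
  ring

theorem scaleVars_one (p : MvPolynomial σ R) : scaleVars 1 p = p := by
  ext m
  simp [coeff_scaleVars]

end ScaleVars

section Signs

variable {R σ : Type*} [CommRing R]

noncomputable def signChange (e : σ → ℤˣ) : MvPolynomial σ R →ₐ[R] MvPolynomial σ R :=
  scaleVars fun i => ((e i : ℤ) : R)

theorem signChange_signChange (e e' : σ → ℤˣ) (p : MvPolynomial σ R) :
    signChange e (signChange e' p) = signChange (e * e') p := by
  simp only [signChange, scaleVars_scaleVars]
  congr 2
  ext i
  simp

theorem signChange_one (p : MvPolynomial σ R) : signChange 1 p = p := by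
  simp only [signChange, Pi.one_apply, Units.val_one, Int.cast_one]
  exact scaleVars_one p

theorem signChange_injective (e : σ → ℤˣ) :
    Function.Injective (signChange e : MvPolynomial σ R → MvPolynomial σ R) :=
  Function.LeftInverse.injective (g := signChange e⁻¹) fun p => by
    rw [signChange_signChange, inv_mul_cancel, signChange_one]

variable [Fintype σ] [DecidableEq σ]

noncomputable def signNorm (p : MvPolynomial σ R) : MvPolynomial σ R :=
  ∏ e : σ → ℤˣ, signChange e p

theorem signChange_signNorm (e : σ → ℤˣ) (p : MvPolynomial σ R) :
    signChange e (signNorm p) = signNorm p := by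
  simp only [signNorm, map_prod, signChange_signChange]
  exact Fintype.prod_equiv (Equiv.mulLeft e) _ _ fun _ => rfl

theorem dvd_signNorm (p : MvPolynomial σ R) : p ∣ signNorm p := by
  simpa [signNorm, signChange_one] using
    Finset.dvd_prod_of_mem (fun e => signChange e p) (Finset.mem_univ 1)

theorem signNorm_ne_zero [IsDomain R] {p : MvPolynomial σ R} (hp : p ≠ 0) : signNorm p ≠ 0 :=
  Finset.prod_ne_zero_iff.mpr fun e _ => (map_ne_zero_iff _ (signChange_injective e)).mpr hp

theorem eq_C_of_signNorm_eq_C [IsDomain R] {p : MvPolynomial σ R} {c : R}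
    (h : signNorm p = C c) : ∃ a, p = C a := by
  rcases eq_or_ne p 0 with rfl | hp
  · exact ⟨0, C_0.symm⟩
  obtain ⟨q, hq⟩ := dvd_signNorm p
  have hq0 : q ≠ 0 := by
    rintro rfl
    exact signNorm_ne_zero hp (by rw [hq, mul_zero])
  have hdeg := totalDegree_mul_of_isDomain hp hq0
  rw [← hq, h, totalDegree_C] at hdeg
  exact ⟨_, totalDegree_eq_zero_iff_eq_C.mp (by omega)⟩

theorem even_of_forall_signChange_eq [NoZeroDivisors R] [CharZero R] {p : MvPolynomial σ R}
    (hp : ∀ e, signChange e p = p) {m : σ →₀ ℕ} (hm : m ∈ p.support) (i : σ) : Even (m i) := by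
  have key := congrArg (coeff m) (hp (Pi.mulSingle i (-1)))
  rw [signChange, coeff_scaleVars, Finsupp.prod_fintype _ _ fun _ => pow_zero _,
    Fintype.prod_eq_single i fun j hj => by simp [Pi.mulSingle_eq_of_ne hj]] at key
  simp only [Pi.mulSingle_eq_same, Units.val_neg, Units.val_one, Int.cast_neg, Int.cast_one]
    at key
  have : (-1 : R) ^ m i = 1 := by
    simpa using mul_right_cancel₀ (mem_support_iff.mp hm) (key.trans (one_mul _).symm)
  exact (neg_one_pow_eq_one_iff_even (by norm_num)).mp this

end Signs

theorem exists_expand_two_eq {R σ : Type*} [CommSemiring R] {p : MvPolynomial σ R}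
    (hp : ∀ m ∈ p.support, ∀ i, Even (m i)) : ∃ q, expand 2 q = p := by
  let half (m : σ →₀ ℕ) : σ →₀ ℕ := m.mapRange (· / 2) (Nat.zero_div 2)
  have two_smul_half : ∀ m ∈ p.support, 2 • half m = m := fun m hm => by
    ext i
    simp [half, Nat.two_mul_div_two_of_even (hp m hm i)]
  refine ⟨∑ m ∈ p.support, monomial (half m) (coeff m p), ?_⟩
  conv_rhs => rw [p.as_sum]
  rw [map_sum]
  exact Finset.sum_congr rfl fun m hm => by rw [expand_monomial, two_smul_half m hm]

section Euler

variable {R σ : Type*} [CommSemiring R]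

theorem mkDerivation_apply_eq_sum_pderiv [Fintype σ] (f : σ → MvPolynomial σ R)
    (p : MvPolynomial σ R) : mkDerivation R f p = ∑ i, pderiv i p * f i := by
  classical
  induction p using MvPolynomial.induction_on with
  | C a => simp [derivation_C]
  | add p q hp hq => simp only [map_add, hp, hq, add_mul, Finset.sum_add_distrib]
  | mul_X p j hp =>
    simp [Derivation.leibniz, hp, pderiv_X, Pi.single_apply, add_mul, Finset.sum_add_distrib,
      Finset.mul_sum, mul_assoc]

noncomputable def eulerDerivation (w : σ → R) :
    Derivation R (MvPolynomial σ R) (MvPolynomial σ R) :=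
  mkDerivation R fun i => C (w i) * X i

variable [Fintype σ]

theorem eulerDerivation_monomial (w : σ → R) (n : σ →₀ ℕ) (a : R) :
    eulerDerivation w (monomial n a) = monomial n ((∑ i, (n i : R) * w i) * a) := by
  rw [eulerDerivation, mkDerivation_apply_eq_sum_pderiv, Finset.sum_mul, map_sum]
  refine Finset.sum_congr rfl fun i _ => ?_
  rw [mul_left_comm, mul_comm _ (X i), X_mul_pderiv_monomial, nsmul_eq_mul, ← map_natCast C,
    C_mul_monomial, C_mul_monomial, mul_left_comm, mul_assoc]

theorem coeff_eulerDerivation (w : σ → R) (p : MvPolynomial σ R) (m : σ →₀ ℕ) :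
    coeff m (eulerDerivation w p) = (∑ i, (m i : R) * w i) * coeff m p := by
  classical
  induction p using induction_on' with
  | monomial n a =>
    rw [eulerDerivation_monomial, coeff_monomial, coeff_monomial]
    split_ifs with h <;> simp [h]
  | add p q hp hq => rw [map_add, coeff_add, coeff_add, hp, hq, mul_add]

theorem eq_C_of_eulerDerivation_eq_zero [NoZeroDivisors R] {w : σ → R}
    (hw : ∀ m : σ →₀ ℕ, ∑ i, (m i : R) * w i = 0 → m = 0) {p : MvPolynomial σ R}
    (hp : eulerDerivation w p = 0) : p = C (coeff 0 p) := by
  classical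
  ext m
  rw [coeff_C]
  split_ifs with h
  · rw [h]
  · have := coeff_eulerDerivation w p m
    rw [hp, coeff_zero, eq_comm, mul_eq_zero] at this
    exact this.resolve_left fun hm => h (hw m hm).symm

end Euler

end MvPolynomial

namespace Derivation

variable {R A σ : Type*} [CommSemiring R] [CommSemiring A] [Algebra R A]

theorem apply_aeval_eq_mul_aeval (D : Derivation R A A)
    (E : Derivation R (MvPolynomial σ R) (MvPolynomial σ R)) (g : σ → A) (c : A)
    (h : ∀ i, D (g i) = c * aeval g (E (X i))) (p : MvPolynomial σ R) :
    D (aeval g p) = c * aeval g (E p) := by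
  induction p using MvPolynomial.induction_on with
  | C a => simp [derivation_C]
  | add p q hp hq => simp only [map_add, hp, hq, mul_add]
  | mul_X p i hp =>
    simp only [map_mul, aeval_X, leibniz, smul_eq_mul, hp, h]
    simp only [map_add, map_mul, aeval_X]
    ring

theorem map_prod_eq_zero {ι : Type*} (D : Derivation R A A) (s : Finset ι) (f : ι → A)
    (h : ∀ i ∈ s, D (f i) = 0) : D (∏ i ∈ s, f i) = 0 :=
  Finset.prod_induction f (fun a => D a = 0)
    (fun a b ha hb => by rw [leibniz, ha, hb, smul_zero, smul_zero, add_zero])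
    D.map_one_eq_zero h

end Derivation

noncomputable section

namespace PolynomialFirstIntegral

def f₀ (lam : ℝ) : Fin 2 → MvPolynomial (Fin 2) ℝ :=
  ![C (-2 * lam) * X 1 * (X 0 ^ 2 + X 1 ^ 2) - 2 * X 1 * (2 * X 0 ^ 2 + X 1 ^ 2),
    C (4 * lam) * X 0 * (X 0 ^ 2 + X 1 ^ 2) + 2 * X 0 * (2 * X 0 ^ 2 + X 1 ^ 2)]

def invariants : Fin 2 → MvPolynomial (Fin 2) ℝ :=
  ![X 0 ^ 2 + X 1 ^ 2, 2 * X 0 ^ 2 + X 1 ^ 2]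

theorem mkDerivation_f₀_signChange (lam : ℝ) (e : Fin 2 → ℤˣ)
    (p : MvPolynomial (Fin 2) ℝ) :
    mkDerivation ℝ (f₀ lam) (signChange e p)
      = C (((e 0 * e 1 : ℤˣ) : ℤ) : ℝ) * signChange e (mkDerivation ℝ (f₀ lam) p) := by
  refine Derivation.apply_aeval_eq_mul_aeval _ _ _ _ (fun i => ?_) p
  rcases Int.units_eq_one_or (e 0) with h0 | h0 <;>
    rcases Int.units_eq_one_or (e 1) with h1 | h1 <;>
    fin_cases i <;> simp [h0, h1, f₀, map_ofNat] <;> ring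

theorem mkDerivation_f₀_aeval_invariants (lam : ℝ) (q : MvPolynomial (Fin 2) ℝ) :
    mkDerivation ℝ (f₀ lam) (aeval invariants q)
      = 4 * X 0 * X 1 * aeval invariants (eulerDerivation ![lam, -1] q) := by
  have map_two : mkDerivation ℝ (f₀ lam) 2 = 0 := by
    exact_mod_cast (mkDerivation ℝ (f₀ lam)).map_natCast 2
  refine Derivation.apply_aeval_eq_mul_aeval _ _ _ _ (fun i => ?_) q
  fin_cases i <;>
    simp [invariants, eulerDerivation, Derivation.leibniz, Derivation.leibniz_pow, map_two] <;>
    simp [f₀, map_ofNat] <;> ring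

def invariantCoords : MvPolynomial (Fin 2) ℝ ≃ₐ[ℝ] MvPolynomial (Fin 2) ℝ :=
  AlgEquiv.ofAlgHom (aeval ![X 0 + X 1, 2 * X 0 + X 1]) (aeval ![X 1 - X 0, 2 * X 0 - X 1])
    (algHom_ext fun i => by fin_cases i <;> simp [map_ofNat] <;> ring)
    (algHom_ext fun i => by fin_cases i <;> simp [map_ofNat] <;> ring)

theorem aeval_invariants_eq_expand (q : MvPolynomial (Fin 2) ℝ) :
    aeval invariants q = expand 2 (invariantCoords q) := by
  have : aeval invariants = (expand 2).comp (invariantCoords : _ →ₐ[ℝ] _) :=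
    algHom_ext fun i => by fin_cases i <;> simp [invariants, invariantCoords, map_ofNat]
  exact DFunLike.congr_fun this q

theorem aeval_invariants_injective : Function.Injective (aeval (R := ℝ) invariants) := by
  intro p q h
  simp only [aeval_invariants_eq_expand] at h
  exact invariantCoords.injective (expand_injective two_pos h)

theorem eq_zero_of_irrational_weight_eq_zero {lam : ℝ} (hirr : Irrational lam)
    (m : Fin 2 →₀ ℕ) (hm : ∑ i, (m i : ℝ) * ![lam, -1] i = 0) : m = 0 := by
  simp only [Fin.sum_univ_two, Matrix.cons_val_zero, Matrix.cons_val_one, mul_neg, mul_one] at hm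
  have h0 : m 0 = 0 := by
    by_contra h0
    exact (hirr.natCast_mul h0).ne_nat (m 1) (by linarith)
  have h1 : m 1 = 0 := by
    rw [h0, Nat.cast_zero] at hm
    exact_mod_cast (by linarith : (m 1 : ℝ) = 0)
  ext i
  fin_cases i <;> assumption

theorem exists_signNorm_eq_C {lam : ℝ} (hirr : Irrational lam) {V : MvPolynomial (Fin 2) ℝ}
    (hV : mkDerivation ℝ (f₀ lam) V = 0) : ∃ c : ℝ, signNorm V = C c := by
  have hW : mkDerivation ℝ (f₀ lam) (signNorm V) = 0 :=
    Derivation.map_prod_eq_zero _ _ _ fun e _ => by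
      rw [mkDerivation_f₀_signChange, hV, map_zero, mul_zero]
  obtain ⟨P, hP⟩ := exists_expand_two_eq fun m hm =>
    even_of_forall_signChange_eq (signChange_signNorm · V) hm
  set Q := invariantCoords.symm P
  have hQ : aeval invariants Q = signNorm V := by
    rw [aeval_invariants_eq_expand, AlgEquiv.apply_symm_apply, hP]
  have hEQ : eulerDerivation ![lam, -1] Q = 0 := by
    rw [← hQ, mkDerivation_f₀_aeval_invariants] at hW
    have hxy : (4 * X 0 * X 1 : MvPolynomial (Fin 2) ℝ) ≠ 0 := by simp [X_ne_zero]
    exact aeval_invariants_injective (by rw [(mul_eq_zero.mp hW).resolve_left hxy, map_zero])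
  have hQC : Q = C (coeff 0 Q) :=
    eq_C_of_eulerDerivation_eq_zero (eq_zero_of_irrational_weight_eq_zero hirr) hEQ
  refine ⟨coeff 0 Q, ?_⟩
  rw [← hQ]
  conv_lhs => rw [hQC]
  exact aeval_C _ _

end PolynomialFirstIntegral

end

theorem no_nonconstant_polynomial_first_integral_general
    (lam : ℝ) (hirr : Irrational lam)
    (f1 f2 : MvPolynomial (Fin 2) ℝ)
    (hf1 : f1 = C (-2*lam) * X 1 * (X 0 ^ 2 + X 1 ^ 2)
      - 2 * X 1 * (2 * X 0 ^ 2 + X 1 ^ 2))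
    (hf2 : f2 = C (4*lam) * X 0 * (X 0 ^ 2 + X 1 ^ 2)
      + 2 * X 0 * (2 * X 0 ^ 2 + X 1 ^ 2)) :
    ∀ V : MvPolynomial (Fin 2) ℝ,
      pderiv 0 V * f1 + pderiv 1 V * f2 = 0 → ∃ c : ℝ, V = C c := by
  intro V hV
  have hDV : mkDerivation ℝ (PolynomialFirstIntegral.f₀ lam) V = 0 := by
    rwa [mkDerivation_apply_eq_sum_pderiv, Fin.sum_univ_two, PolynomialFirstIntegral.f₀,
      Matrix.cons_val_zero, Matrix.cons_val_one, Matrix.cons_val_zero, ← hf1, ← hf2]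
  obtain ⟨c, hc⟩ := PolynomialFirstIntegral.exists_signNorm_eq_C hirr hDV
  exact eq_C_of_signNorm_eq_C hc

/-- For irrational `λ > 0`, the vector field
`f₀(x,y) = (−2λy(x²+y²) − 2y(2x²+y²), 4λx(x²+y²) + 2x(2x²+y²))` admits no nonconstant
polynomial first integral: any polynomial `V` with `(∂V/∂x)·f₀₁ + (∂V/∂y)·f₀₂ = 0`
identically must be constant. -/
theorem no_nonconstant_polynomial_first_integral
    (lam : ℝ) (hlam : 0 < lam) (hirr : Irrational lam)
    (f1 f2 : MvPolynomial (Fin 2) ℝ)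
    (hf1 : f1 = C (-2*lam) * X 1 * (X 0 ^ 2 + X 1 ^ 2)
      - 2 * X 1 * (2 * X 0 ^ 2 + X 1 ^ 2))
    (hf2 : f2 = C (4*lam) * X 0 * (X 0 ^ 2 + X 1 ^ 2)
      + 2 * X 0 * (2 * X 0 ^ 2 + X 1 ^ 2)) :
    ∀ V : MvPolynomial (Fin 2) ℝ,
      pderiv 0 V * f1 + pderiv 1 V * f2 = 0 → ∃ c : ℝ, V = C c :=
  no_nonconstant_polynomial_first_integral_general lam hirr f1 f2 hf1 hf2
end

section
/- Let λ > 0 and θ ∈ (0,π) be real numbers. Define f₀ : ℝ² → ℝ² by f₀(x,y) = (−2λy(x²+y²) − 2y(2x²+y²), 4λx(x²+y²) + 2x(2x²+y²)) and let f_θ(x,y) = (cos(θ)·f₀₁(x,y) − sin(θ)·f₀₂(x,y), sin(θ)·f₀₁(x,y) + cos(θ)·f₀₂(x,y)) be the rotation of f₀ by angle θ. Then the function W(x,y) = (2x²+y²)^λ (x²+y²) satisfies ⟨∇W(x,y), f_θ(x,y)⟩ = −sin(θ)·(2x²+y²)^{λ−1}·(f₀₁(x,y)² + f₀₂(x,y)²)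 < 0 for all (x,y) ≠ (0,0). In particular, W is positive definite with negative definite derivative along the homogeneous cubic vector field f_θ, proving its asymptotic stability. -/
open RealInnerProductSpace Real

/-!
Write `A = 2x² + y²` and `B = x² + y²`. Then `∇W = A^(λ-1) (λ B ∇A + A ∇B) = A^(λ-1) (f₀₂, -f₀₁)`:
the gradient is `A^(λ-1)` times `f₀` turned by `-π/2`. Pairing `f₀` turned by `-π/2` with `f₀` turned
by `θ` gives `cos(θ + π/2) |f₀|² = -sin θ |f₀|²`. Off the origin `sin θ > 0` and `f₀ ≠ 0`, since the
components of `f₀` are `y` and `x` times factors that are positive for `λ > 0`.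
-/

section Gradient

variable {F : Type*} [NormedAddCommGroup F] [InnerProductSpace ℝ F] [CompleteSpace F]
  {f g : F → ℝ} {f' g' x : F}

theorem HasGradientAt.mul (hf : HasGradientAt f f' x) (hg : HasGradientAt g g' x) :
    HasGradientAt (fun y => f y * g y) (f x • g' + g x • f') x := by
  rw [hasGradientAt_iff_hasFDerivAt] at *
  simpa only [map_add, map_smul] using hf.fun_mul hg

theorem HasGradientAt.rpow_const (hf : HasGradientAt f f' x) (r : ℝ) (hx : f x ≠ 0) :
    HasGradientAt (fun y => f y ^ r) ((r * f x ^ (r - 1)) • f') x := by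
  rw [hasGradientAt_iff_hasFDerivAt] at *
  simpa only [map_smul] using hf.rpow_const (Or.inl hx)

end Gradient

theorem sq_add_sq_mul_pos {x y a b : ℝ} (ha : 0 < a) (hb : 0 < b) (h : 0 < x ^ 2 + y ^ 2) :
    0 < (x * a) ^ 2 + (y * b) ^ 2 := by
  rcases eq_or_ne x 0 with rfl | hx
  · have hy : y ≠ 0 := by rintro rfl; simp at h
    positivity
  · positivity

namespace EuclideanSpace

theorem sq_add_sq_pos_of_ne_zero {p : EuclideanSpace ℝ (Fin 2)} (hp : p ≠ 0) :
    0 < p 0 ^ 2 + p 1 ^ 2 := by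
  simpa [real_norm_sq_eq, Fin.sum_univ_two] using pow_pos (norm_pos_iff.2 hp) 2

theorem hasGradientAt_weighted_sq_add_sq (a b : ℝ) (p : EuclideanSpace ℝ (Fin 2)) :
    HasGradientAt (fun q : EuclideanSpace ℝ (Fin 2) => a * q 0 ^ 2 + b * q 1 ^ 2)
      !₂[2 * a * p 0, 2 * b * p 1] p := by
  have h0 := (proj (𝕜 := ℝ) (0 : Fin 2)).hasFDerivAt (x := p)
  have h1 := (proj (𝕜 := ℝ) (1 : Fin 2)).hasFDerivAt (x := p)
  rw [hasGradientAt_iff_hasFDerivAt]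
  refine (((h0.pow 2).const_mul a).fun_add ((h1.pow 2).const_mul b)).congr_fderiv ?_
  ext v
  simp [PiLp.inner_apply, Fin.sum_univ_two]
  ring

theorem hasGradientAt_rpow_mul_sq_add_sq (lam : ℝ) {p : EuclideanSpace ℝ (Fin 2)}
    (hp : 2 * p 0 ^ 2 + p 1 ^ 2 ≠ 0) :
    HasGradientAt
      (fun q : EuclideanSpace ℝ (Fin 2) => (2 * q 0 ^ 2 + q 1 ^ 2) ^ lam * (q 0 ^ 2 + q 1 ^ 2))
      ((2 * p 0 ^ 2 + p 1 ^ 2) ^ (lam - 1) •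
        !₂[4 * lam * p 0 * (p 0 ^ 2 + p 1 ^ 2) + 2 * p 0 * (2 * p 0 ^ 2 + p 1 ^ 2),
           2 * lam * p 1 * (p 0 ^ 2 + p 1 ^ 2) + 2 * p 1 * (2 * p 0 ^ 2 + p 1 ^ 2)]) p := by
  have hA := hasGradientAt_weighted_sq_add_sq 2 1 p
  have hB := hasGradientAt_weighted_sq_add_sq 1 1 p
  simp only [one_mul] at hA hB
  convert (hA.rpow_const lam hp).mul hB using 1
  have hpow : (2 * p 0 ^ 2 + p 1 ^ 2) ^ lam
      = (2 * p 0 ^ 2 + p 1 ^ 2) ^ (lam - 1) * (2 * p 0 ^ 2 + p 1 ^ 2) := by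
    rw [← rpow_add_one hp]; ring_nf
  ext i
  fin_cases i <;> simp [hpow] <;> ring

theorem inner_perp_rotation (θ : ℝ) {u v : EuclideanSpace ℝ (Fin 2)}
    (h0 : v 0 = cos θ * u 0 - sin θ * u 1) (h1 : v 1 = sin θ * u 0 + cos θ * u 1) :
    ⟪!₂[u 1, -u 0], v⟫ = -sin θ * (u 0 ^ 2 + u 1 ^ 2) := by
  simp [PiLp.inner_apply, Fin.sum_univ_two, h0, h1]
  ring

theorem bacciotti_rosier_sq_add_sq_pos {lam : ℝ} (hlam : 0 < lam) {p : EuclideanSpace ℝ (Fin 2)}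
    (hp : p ≠ 0) :
    0 < (-2 * lam * p 1 * (p 0 ^ 2 + p 1 ^ 2) - 2 * p 1 * (2 * p 0 ^ 2 + p 1 ^ 2)) ^ 2
      + (4 * lam * p 0 * (p 0 ^ 2 + p 1 ^ 2) + 2 * p 0 * (2 * p 0 ^ 2 + p 1 ^ 2)) ^ 2 := by
  have hB := sq_add_sq_pos_of_ne_zero hp
  have hc0 : 0 < 4 * lam * (p 0 ^ 2 + p 1 ^ 2) + 2 * (2 * p 0 ^ 2 + p 1 ^ 2) := by
    nlinarith [mul_pos hlam hB]
  have hc1 : 0 < 2 * lam * (p 0 ^ 2 + p 1 ^ 2) + 2 * (2 * p 0 ^ 2 + p 1 ^ 2) := by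
    nlinarith [mul_pos hlam hB]
  convert sq_add_sq_mul_pos hc0 hc1 hB using 1
  ring

end EuclideanSpace

/-- For `λ > 0` and `θ ∈ (0, π)`, let `f_θ` be the rotation by angle `θ` of the
vector field `f₀(x,y) = (−2λy(x²+y²) − 2y(2x²+y²), 4λx(x²+y²) + 2x(2x²+y²))`. Then
`W(x,y) = (2x²+y²)^λ (x²+y²)` satisfies
`⟨∇W(x,y), f_θ(x,y)⟩ = −sin(θ)·(2x²+y²)^{λ−1}·(f₀₁² + f₀₂²) < 0` for all `(x,y) ≠ (0,0)`;
in particular `W` is positive definite with negative definite derivative along `f_θ`,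
proving asymptotic stability of the homogeneous cubic vector field `f_θ`. -/
theorem lyapunov_for_rotated_bacciotti_rosier_field
    (lam θ : ℝ) (hlam : 0 < lam) (hθ : θ ∈ Set.Ioo 0 π)
    (f₀ fθ : EuclideanSpace ℝ (Fin 2) → EuclideanSpace ℝ (Fin 2))
    (hf₀1 : ∀ p : EuclideanSpace ℝ (Fin 2),
      f₀ p 0 = -2*lam*(p 1)*((p 0)^2+(p 1)^2) - 2*(p 1)*(2*(p 0)^2+(p 1)^2))
    (hf₀2 : ∀ p : EuclideanSpace ℝ (Fin 2),
      f₀ p 1 = 4*lam*(p 0)*((p 0)^2+(p 1)^2) + 2*(p 0)*(2*(p 0)^2+(p 1)^2))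
    (hfθ1 : ∀ p : EuclideanSpace ℝ (Fin 2), fθ p 0 = cos θ * f₀ p 0 - sin θ * f₀ p 1)
    (hfθ2 : ∀ p : EuclideanSpace ℝ (Fin 2), fθ p 1 = sin θ * f₀ p 0 + cos θ * f₀ p 1)
    (W : EuclideanSpace ℝ (Fin 2) → ℝ)
    (hW : ∀ p : EuclideanSpace ℝ (Fin 2),
      W p = (2*(p 0)^2+(p 1)^2) ^ lam * ((p 0)^2+(p 1)^2)) :
    (∀ p : EuclideanSpace ℝ (Fin 2), p ≠ 0 →
      ⟪gradient W p, fθ p⟫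
        = -sin θ * (2*(p 0)^2+(p 1)^2) ^ (lam - 1) * ((f₀ p 0)^2 + (f₀ p 1)^2)) ∧
    (∀ p : EuclideanSpace ℝ (Fin 2), p ≠ 0 → ⟪gradient W p, fθ p⟫ < 0) ∧
    (W 0 = 0 ∧ ∀ p : EuclideanSpace ℝ (Fin 2), p ≠ 0 → 0 < W p) := by
  have hsin : 0 < sin θ := sin_pos_of_pos_of_lt_pi hθ.1 hθ.2
  have hB : ∀ p : EuclideanSpace ℝ (Fin 2), p ≠ 0 → 0 < (p 0)^2+(p 1)^2 :=
    fun _ => EuclideanSpace.sq_add_sq_pos_of_ne_zero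
  have hA : ∀ p : EuclideanSpace ℝ (Fin 2), p ≠ 0 → 0 < 2*(p 0)^2+(p 1)^2 :=
    fun p hp => by nlinarith [hB p hp, sq_nonneg (p 0)]
  have hgrad : ∀ p : EuclideanSpace ℝ (Fin 2), p ≠ 0 →
      gradient W p = (2*(p 0)^2+(p 1)^2) ^ (lam - 1) • !₂[f₀ p 1, -f₀ p 0] := by
    intro p hp
    rw [funext hW, (EuclideanSpace.hasGradientAt_rpow_mul_sq_add_sq lam (hA p hp).ne').gradient,
      hf₀1, hf₀2]
    congr 4
    ring
  have hderiv : ∀ p : EuclideanSpace ℝ (Fin 2), p ≠ 0 → ⟪gradient W p, fθ p⟫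
      = -sin θ * (2*(p 0)^2+(p 1)^2) ^ (lam - 1) * ((f₀ p 0)^2 + (f₀ p 1)^2) := by
    intro p hp
    rw [hgrad p hp, real_inner_smul_left,
      EuclideanSpace.inner_perp_rotation θ (hfθ1 p) (hfθ2 p)]
    ring
  have hf₀ : ∀ p : EuclideanSpace ℝ (Fin 2), p ≠ 0 → 0 < (f₀ p 0)^2 + (f₀ p 1)^2 := by
    intro p hp
    rw [hf₀1, hf₀2]
    exact EuclideanSpace.bacciotti_rosier_sq_add_sq_pos hlam hp
  refine ⟨hderiv, fun p hp => ?_, by simp [hW], fun p hp => ?_⟩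
  · have := mul_pos (mul_pos hsin (rpow_pos_of_pos (hA p hp) (lam - 1))) (hf₀ p hp)
    rw [hderiv p hp]
    linarith
  · rw [hW]
    exact mul_pos (rpow_pos_of_pos (hA p hp) lam) (hB p hp)
end

section
/- Define, for θ ∈ ℝ, the homogeneous cubic vector field g_θ : ℝ² → ℝ² by g_θ(x,y) = (−sin(θ)·x³ + cos(θ)·y³, −cos(θ)·x³ − sin(θ)·y³). There exists θ̄ ∈ (0,π) such that for all θ ∈ (0,θ̄): (i) the quartic form x⁴ + y⁴ is positive definite with ⟨∇(x⁴+y⁴)(x,y), g_θ(x,y)⟩ < 0 for all (x,y) ≠ (0,0), and (ii) there exists no homogeneous polynomial W ∈ ℝ[x,y] of degree 6 with W(x,y) > 0 for all (x,y) ≠ (0,0) and ⟨∇W(x,y), g_θ(x,y)⟩ < 0 for all (x,y) ≠ (0,0). That is, g_θ admits a homogeneous polynomial Lyapunov function of degree 4 but none of degree 6. -/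
/-!
Along `g_θ` the quartic `x⁴ + y⁴` has derivative `-4 sin θ (x⁶ + y⁶)`.

For a sextic `W`, the derivative along `g_θ` splits as `cos θ · L - sin θ · E` with
`L = y³ ∂ₓW - x³ ∂_yW` (the derivative along the conservative field `g₀`) and
`E = x³ ∂ₓW + y³ ∂_yW`. A positive weighting of the six points `(1, ±1), (2, 1), (1, -2), (1, 3),
(3, -1)`, closed under the quarter turn `(x, y) ↦ (y, -x)` that commutes with `g₀`, sends `L` to
`1440 P` with `P = 2c₀ + c₂ + c₄ + 2c₆` (`cₖ` the coefficient of `xᵏ y⁶⁻ᵏ`), and, once `W > 0` at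
`(1, 0), (0, 1), (1, ±1), (2, 1), (1, -2)`, sends `E` below `223800 P` while making `P` positive.
Hence for `1865 sin θ < 12 cos θ` the weighted derivative is positive, which no Lyapunov function
allows.
-/

open MvPolynomial Real Finset

section BinaryForm

variable {R : Type*} [CommSemiring R]

def binaryForm (n : ℕ) (c : ℕ → R) (x y : R) : R :=
  ∑ k ∈ range (n + 1), c k * x ^ k * y ^ (n - k)

def binaryFormDerivX (n : ℕ) (c : ℕ → R) (x y : R) : R :=
  ∑ k ∈ range (n + 1), k * c k * x ^ (k - 1) * y ^ (n - k)

def binaryFormDerivY (n : ℕ) (c : ℕ → R) (x y : R) : R :=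
  ∑ k ∈ range (n + 1), (n - k : ℕ) * c k * x ^ k * y ^ (n - k - 1)

noncomputable def binaryMonomial (n k : ℕ) : Fin 2 →₀ ℕ :=
  Finsupp.single 0 k + Finsupp.single 1 (n - k)

lemma binaryMonomial_injective (n : ℕ) : Function.Injective (binaryMonomial n) := fun k l h => by
  simpa [binaryMonomial] using DFunLike.congr_fun h 0

lemma eq_binaryMonomial_of_degree_eq {m : Fin 2 →₀ ℕ} {n : ℕ} (h : m.degree = n) :
    m = binaryMonomial n (m 0) := by
  rw [Finsupp.degree_eq_sum, Fin.sum_univ_two] at h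
  ext i
  fin_cases i <;> (simp [binaryMonomial]; try omega)

lemma monomial_binaryMonomial (n k : ℕ) (a : R) :
    monomial (binaryMonomial n k) a = C a * X 0 ^ k * X 1 ^ (n - k) := by
  rw [binaryMonomial, C_mul_X_pow_eq_monomial, X_pow_eq_monomial, monomial_mul, mul_one]

namespace MvPolynomial.IsHomogeneous

variable {W : MvPolynomial (Fin 2) R} {n : ℕ}

theorem sum_binaryMonomial (h : W.IsHomogeneous n) :
    ∑ k ∈ range (n + 1), C (coeff (binaryMonomial n k) W) * X 0 ^ k * X 1 ^ (n - k) = W := by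
  simp_rw [← monomial_binaryMonomial]
  rw [← sum_image (f := fun m => monomial m (coeff m W)) (binaryMonomial_injective n).injOn]
  conv_rhs => rw [W.as_sum]
  refine (sum_subset (fun m hm => ?_) (fun m _ hm => ?_)).symm
  · have hdeg : m.degree = n := by
      by_contra hne
      exact mem_support_iff.mp hm (h.coeff_eq_zero hne)
    refine mem_image.mpr ⟨m 0, mem_range.mpr ?_, (eq_binaryMonomial_of_degree_eq hdeg).symm⟩
    have := Finsupp.le_degree 0 m
    omega
  · rw [notMem_support_iff.mp hm, monomial_zero]

theorem eval_eq_binaryForm (h : W.IsHomogeneous n) (x y : R) :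
    eval ![x, y] W = binaryForm n (fun k => coeff (binaryMonomial n k) W) x y := by
  conv_lhs => rw [← h.sum_binaryMonomial]
  simp [binaryForm]

theorem eval_pderiv_zero_eq_binaryFormDerivX (h : W.IsHomogeneous n) (x y : R) :
    eval ![x, y] (pderiv 0 W) = binaryFormDerivX n (fun k => coeff (binaryMonomial n k) W) x y := by
  conv_lhs => rw [← h.sum_binaryMonomial]
  simp [binaryFormDerivX, mul_comm, mul_left_comm, mul_assoc]

theorem eval_pderiv_one_eq_binaryFormDerivY (h : W.IsHomogeneous n) (x y : R) :
    eval ![x, y] (pderiv 1 W) = binaryFormDerivY n (fun k => coeff (binaryMonomial n k) W) x y := by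
  conv_lhs => rw [← h.sum_binaryMonomial]
  simp [binaryFormDerivY, mul_comm, mul_left_comm, mul_assoc]

end MvPolynomial.IsHomogeneous

end BinaryForm

lemma pow_add_pow_pos {R : Type*} [Ring R] [LinearOrder R] [IsStrictOrderedRing R] {n : ℕ}
    (hn : Even n) (hn0 : n ≠ 0) {x y : R} (h : (x, y) ≠ (0, 0)) : 0 < x ^ n + y ^ n := by
  by_cases hx : x = 0
  · have hy : y ≠ 0 := by rintro rfl; exact h (by rw [hx])
    simpa [hx, hn0] using hn.pow_pos hy
  · exact add_pos_of_pos_of_nonneg (hn.pow_pos hx) (hn.pow_nonneg y)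

def sixPointSum (f : ℝ → ℝ → ℝ) : ℝ :=
  3555 * (f 1 1 + f 1 (-1)) + 56 * (f 2 1 + f 1 (-2)) + 4 * (f 1 3 + f 3 (-1))

lemma sixPointSum_neg {f : ℝ → ℝ → ℝ} (hf : ∀ x y : ℝ, (x, y) ≠ (0, 0) → f x y < 0) :
    sixPointSum f < 0 := by
  have h₁ := hf 1 1 (by norm_num)
  have h₂ := hf 1 (-1) (by norm_num)
  have h₃ := hf 2 1 (by norm_num)
  have h₄ := hf 1 (-2) (by norm_num)
  have h₅ := hf 1 3 (by norm_num)
  have h₆ := hf 3 (-1) (by norm_num)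
  rw [sixPointSum]
  linarith

section Sextic

variable {c : ℕ → ℝ}

variable (c) in
lemma sixPointSum_rotational :
    sixPointSum (fun x y => y ^ 3 * binaryFormDerivX 6 c x y - x ^ 3 * binaryFormDerivY 6 c x y)
      = 1440 * (2 * c 0 + c 2 + c 4 + 2 * c 6) := by
  simp only [sixPointSum, binaryFormDerivX, binaryFormDerivY, Nat.reduceAdd, Nat.reduceSub,
    sum_range_succ, sum_range_zero, Nat.cast_ofNat, Nat.cast_zero, Nat.cast_one]
  ring

variable (c) in
lemma sixPointSum_radial :
    sixPointSum (fun x y => x ^ 3 * binaryFormDerivX 6 c x y + y ^ 3 * binaryFormDerivY 6 c x y)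
      = 286500 * (c 0 + c 6) + 74580 * (c 2 + c 4) + 7920 * (c 1 - c 5) := by
  simp only [sixPointSum, binaryFormDerivX, binaryFormDerivY, Nat.reduceAdd, Nat.reduceSub,
    sum_range_succ, sum_range_zero, Nat.cast_ofNat, Nat.cast_zero, Nat.cast_one]
  ring

lemma coeff_combinations_pos_of_binaryForm_pos
    (hpos : ∀ x y : ℝ, (x, y) ≠ (0, 0) → 0 < binaryForm 6 c x y) :
    0 < c 0 + c 6 ∧ 0 < c 0 + c 2 + c 4 + c 6 ∧
      0 < 65 * (c 0 + c 6) - 30 * (c 1 - c 5) + 20 * (c 2 + c 4) := by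
  have h₁ := hpos 1 0 (by norm_num)
  have h₂ := hpos 0 1 (by norm_num)
  have h₃ := hpos 1 1 (by norm_num)
  have h₄ := hpos 1 (-1) (by norm_num)
  have h₅ := hpos 2 1 (by norm_num)
  have h₆ := hpos 1 (-2) (by norm_num)
  norm_num [binaryForm, sum_range_succ] at h₁ h₂ h₃ h₄ h₅ h₆
  exact ⟨by linarith, by linarith, by linarith⟩

theorem exists_deriv_nonneg_of_binaryForm_six_pos {s co : ℝ} (hs : 0 < s)
    (hsc : 1865 * s < 12 * co) (hpos : ∀ x y : ℝ, (x, y) ≠ (0, 0) → 0 < binaryForm 6 c x y) :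
    ∃ x y : ℝ, (x, y) ≠ (0, 0) ∧ 0 ≤ binaryFormDerivX 6 c x y * (-s * x ^ 3 + co * y ^ 3) +
      binaryFormDerivY 6 c x y * (-co * x ^ 3 - s * y ^ 3) := by
  by_contra! hneg
  set P := 2 * c 0 + c 2 + c 4 + 2 * c 6
  obtain ⟨hv, hvw, hpc⟩ := coeff_combinations_pos_of_binaryForm_pos hpos
  have hP : 0 < P := by linarith
  have hradial : sixPointSum (fun x y => x ^ 3 * binaryFormDerivX 6 c x y +
      y ^ 3 * binaryFormDerivY 6 c x y) < 223800 * P := by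
    rw [sixPointSum_radial]
    linarith
  have hsplit : sixPointSum (fun x y => binaryFormDerivX 6 c x y * (-s * x ^ 3 + co * y ^ 3) +
      binaryFormDerivY 6 c x y * (-co * x ^ 3 - s * y ^ 3)) =
      co * sixPointSum (fun x y => y ^ 3 * binaryFormDerivX 6 c x y -
        x ^ 3 * binaryFormDerivY 6 c x y) -
      s * sixPointSum (fun x y => x ^ 3 * binaryFormDerivX 6 c x y +
        y ^ 3 * binaryFormDerivY 6 c x y) := by
    simp only [sixPointSum]
    ring
  have hsum := sixPointSum_neg hneg
  rw [hsplit, sixPointSum_rotational] at hsum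
  nlinarith [mul_lt_mul_of_pos_left hradial hs, mul_pos hP (by linarith : 0 < 12 * co - 1865 * s)]

end Sextic

theorem not_exists_sextic_lyapunov {θ : ℝ} (hs : 0 < sin θ) (hθ : 1865 * sin θ < 12 * cos θ) :
    ¬ ∃ W : MvPolynomial (Fin 2) ℝ, W.IsHomogeneous 6 ∧
        (∀ x y : ℝ, (x, y) ≠ (0, 0) → 0 < eval ![x, y] W) ∧
        (∀ x y : ℝ, (x, y) ≠ (0, 0) →
          eval ![x, y] (pderiv 0 W) * (-sin θ * x ^ 3 + cos θ * y ^ 3) +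
          eval ![x, y] (pderiv 1 W) * (-cos θ * x ^ 3 - sin θ * y ^ 3) < 0) := by
  rintro ⟨W, hW, hpos, hder⟩
  obtain ⟨x, y, hxy, hnonneg⟩ := exists_deriv_nonneg_of_binaryForm_six_pos hs hθ
    (fun x y hxy => hW.eval_eq_binaryForm x y ▸ hpos x y hxy)
  have hneg := hder x y hxy
  rw [hW.eval_pderiv_zero_eq_binaryFormDerivX, hW.eval_pderiv_one_eq_binaryFormDerivY] at hneg
  linarith

/-- For the homogeneous cubic vector field
`g_θ(x,y) = (−sin(θ)x³ + cos(θ)y³, −cos(θ)x³ − sin(θ)y³)`, there exists `θ̄ ∈ (0, π)` such that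
for all `θ ∈ (0, θ̄)`: (i) the quartic form `x⁴ + y⁴` is positive definite and its derivative
along `g_θ` (its gradient being `(4x³, 4y³)`) is negative away from the origin, and (ii) there
is no homogeneous polynomial Lyapunov function of degree `6` for `g_θ`. That is, `g_θ` admits a
homogeneous polynomial Lyapunov function of degree `4` but none of degree `6`. -/
theorem degree_four_lyapunov_but_no_degree_six :
    ∃ θbar ∈ Set.Ioo (0 : ℝ) π, ∀ θ ∈ Set.Ioo (0 : ℝ) θbar,
      ((∀ x y : ℝ, (x, y) ≠ (0, 0) → 0 < x^4 + y^4) ∧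
       (∀ x y : ℝ, (x, y) ≠ (0, 0) →
         4*x^3 * (-sin θ * x^3 + cos θ * y^3) +
         4*y^3 * (-cos θ * x^3 - sin θ * y^3) < 0)) ∧
      ¬ ∃ W : MvPolynomial (Fin 2) ℝ, W.IsHomogeneous 6 ∧
        (∀ x y : ℝ, (x, y) ≠ (0, 0) → 0 < eval ![x, y] W) ∧
        (∀ x y : ℝ, (x, y) ≠ (0, 0) →
          eval ![x, y] (pderiv 0 W) * (-sin θ * x^3 + cos θ * y^3) +
          eval ![x, y] (pderiv 1 W) * (-cos θ * x^3 - sin θ * y^3) < 0) := by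
  refine ⟨1 / 1000, ⟨by norm_num, by linarith [pi_gt_three]⟩, fun θ ⟨hθ0, hθ1⟩ => ?_⟩
  have hs : 0 < sin θ := sin_pos_of_pos_of_lt_pi hθ0 (by linarith [pi_gt_three])
  have hsc : 1865 * sin θ < 12 * cos θ := by
    nlinarith [sin_lt hθ0, one_sub_sq_div_two_le_cos (x := θ)]
  refine ⟨⟨fun x y hxy => pow_add_pow_pos (by decide) (by norm_num) hxy, fun x y hxy => ?_⟩,
    not_exists_sextic_lyapunov hs hsc⟩
  have h6 : 0 < x ^ 6 + y ^ 6 := pow_add_pow_pos (by decide) (by norm_num) hxy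
  linear_combination 4 * mul_pos hs h6
end

section
/- Let W ∈ ℝ[x,y] be a homogeneous polynomial of degree 6 satisfying y³·(∂W/∂x) − x³·(∂W/∂y) = 0 identically. Then W = 0. -/
/-!
Compare coefficients in `y³ ∂ₓW = x³ ∂ᵧW`. A monomial `xᵃ yᵇ⁺³` with `a < 3` occurs only on the
left, which forces the coefficient of `xᵃ⁺¹ yᵇ` in `W` to vanish; symmetrically in `y`. This kills
every sextic monomial except `x⁶` and `y⁶`, and the identity at `x⁵ y³` ties the coefficient of
`x⁶` to that of `x² y⁴`, which is already zero.
-/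

namespace MvPolynomial

variable {σ R : Type*} [CommSemiring R]

theorem coeff_add_single_X_pow_mul (m : σ →₀ ℕ) (j : σ) (k : ℕ) (q : MvPolynomial σ R) :
    coeff (m + Finsupp.single j k) (X j ^ k * q) = coeff m q := by
  rw [X_pow_eq_monomial, add_comm, coeff_monomial_mul, one_mul]

theorem coeff_X_pow_mul_eq_zero {n : σ →₀ ℕ} {j : σ} {k : ℕ} (hn : n j < k)
    (q : MvPolynomial σ R) : coeff n (X j ^ k * q) = 0 := by
  rw [X_pow_eq_monomial, coeff_monomial_mul', if_neg (by simpa [Finsupp.single_le_iff])]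

variable {i j : σ} {k : ℕ} {p : MvPolynomial σ R}

theorem coeff_add_single_mul_eq (h : X j ^ k * pderiv i p = X i ^ k * pderiv j p)
    (m : σ →₀ ℕ) :
    coeff (m + Finsupp.single i (k + 1)) p * (m i + k + 1) =
      coeff (m + Finsupp.single j (k + 1)) p * (m j + k + 1) := by
  classical
  have := congrArg (coeff (m + Finsupp.single i k + Finsupp.single j k)) h
  rw [coeff_add_single_X_pow_mul, add_right_comm, coeff_add_single_X_pow_mul, coeff_pderiv,
    coeff_pderiv, add_assoc, add_assoc, ← Finsupp.single_add, ← Finsupp.single_add] at this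
  simpa [add_assoc] using this

variable [NoZeroDivisors R] [CharZero R]

theorem coeff_eq_zero_of_X_pow_mul_pderiv_eq (hij : i ≠ j)
    (h : X j ^ k * pderiv i p = X i ^ k * pderiv j p) {d : σ →₀ ℕ} (hd₁ : 1 ≤ d i)
    (hdk : d i ≤ k) : coeff d p = 0 := by
  classical
  set m := d - Finsupp.single i 1
  have hmd : m + Finsupp.single i 1 = d := tsub_add_cancel_of_le (by simpa)
  have := congrArg (coeff (m + Finsupp.single j k)) h
  rw [coeff_add_single_X_pow_mul, coeff_pderiv, hmd, coeff_X_pow_mul_eq_zero] at this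
  · exact (mul_eq_zero.mp this).resolve_right (Nat.cast_add_one_ne_zero _)
  · simp [m, hij]; omega

theorem coeff_single_two_mul_eq_zero (hij : i ≠ j) (hk : 2 ≤ k)
    (h : X j ^ k * pderiv i p = X i ^ k * pderiv j p) :
    coeff (Finsupp.single i (2 * k)) p = 0 := by
  classical
  have hmixed : coeff (Finsupp.single i (k - 1) + Finsupp.single j (k + 1)) p = 0 :=
    coeff_eq_zero_of_X_pow_mul_pderiv_eq hij h (by simp [hij]; omega) (by simp [hij])
  have hpure := coeff_add_single_mul_eq h (Finsupp.single i (k - 1))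
  rw [hmixed, zero_mul, ← Finsupp.single_add, show k - 1 + (k + 1) = 2 * k by omega,
    Finsupp.single_eq_same, mul_eq_zero] at hpure
  exact hpure.resolve_right (by exact_mod_cast Nat.succ_ne_zero (k - 1 + k))

end MvPolynomial

open MvPolynomial

/-- A homogeneous polynomial `W` of degree `6` in two variables satisfying
`y³·(∂W/∂x) − x³·(∂W/∂y) = 0` identically (i.e., a sextic first integral of the vector field
`ẋ = y³, ẏ = −x³`) must be zero. -/
theorem sextic_first_integral_is_zero
    (W : MvPolynomial (Fin 2) ℝ) (hWhom : W.IsHomogeneous 6)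
    (h : X 1 ^ 3 * pderiv 0 W - X 0 ^ 3 * pderiv 1 W = 0) :
    W = 0 := by
  have h₀ : X 1 ^ 3 * pderiv 0 W = X 0 ^ 3 * pderiv 1 W := sub_eq_zero.mp h
  ext d
  rw [coeff_zero]
  by_cases hdeg : d 0 + d 1 = 6
  swap
  · exact hWhom.coeff_eq_zero (by simpa [Finsupp.degree_eq_sum, Fin.sum_univ_two])
  have hd : d = Finsupp.single 0 (d 0) + Finsupp.single 1 (d 1) := by
    ext i; fin_cases i <;> simp
  obtain h0 | h1 | ⟨hx, hy⟩ | ⟨hx, hy⟩ : (1 ≤ d 0 ∧ d 0 ≤ 3) ∨ (1 ≤ d 1 ∧ d 1 ≤ 3) ∨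
      (d 0 = 6 ∧ d 1 = 0) ∨ (d 0 = 0 ∧ d 1 = 6) := by omega
  · exact coeff_eq_zero_of_X_pow_mul_pderiv_eq (by decide) h₀ h0.1 h0.2
  · exact coeff_eq_zero_of_X_pow_mul_pderiv_eq (by decide) h₀.symm h1.1 h1.2
  · rw [hd, hx, hy, Finsupp.single_zero, add_zero]
    exact coeff_single_two_mul_eq_zero (k := 3) (by decide) (by norm_num) h₀
  · rw [hd, hx, hy, Finsupp.single_zero, zero_add]
    exact coeff_single_two_mul_eq_zero (k := 3) (by decide) (by norm_num) h₀.symm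
end

section
/- Let n, m be positive integers and consider a ONE-IN-THREE 3SAT instance with n variables and m clauses, given by variable indices a : Fin m → Fin 3 → Fin n and polarities s : Fin m → Fin 3 → Bool. For x ∈ ℝⁿ, define the literal values ℓ_{j,k}(x) = x_{a(j,k)} if s(j,k) is true and ℓ_{j,k}(x) = 1 − x_{a(j,k)} otherwise, and define the quartic polynomial p(x) = Σ_{i=1}^{n} x_i²(1 − x_i)² + Σ_{j=1}^{m} (ℓ_{j,1}(x) + ℓ_{j,2}(x) + ℓ_{j,3}(x) − 1)². Then there exists x ∈ ℝⁿ with p(x) = 0 if and only if there exists a Boolean assignment b ∈ {0,1}ⁿ such that every clause has exactly one true literal, i.e., ℓ_{j,1}(b) + ℓ_{j,2}(b) + ℓ_{j,3}(b) = 1 for every j. Equivalently, p(x) > 0 for all x ∈ ℝⁿ if and only if the ONE-IN-THREE 3SAT instance is not satisfiable. -/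
/-- For a ONE-IN-THREE 3SAT instance with `n` variables and `m` clauses
(variable indices `a`, polarities `s`), with literal values
`ℓ x j k = if s j k then x (a j k) else 1 - x (a j k)` and the quartic polynomial
`p(x) = Σᵢ xᵢ²(1−xᵢ)² + Σⱼ (ℓ_{j,1} + ℓ_{j,2} + ℓ_{j,3} − 1)²`, the polynomial `p` has a real
zero if and only if some Boolean assignment makes exactly one literal true in every clause;
equivalently, `p > 0` everywhere iff the instance is not satisfiable. -/
theorem one_in_three_3sat_reduction_to_quartic_zeros
    (n m : ℕ) (hn : 0 < n) (hm : 0 < m)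
    (a : Fin m → Fin 3 → Fin n) (s : Fin m → Fin 3 → Bool)
    (ℓ : (Fin n → ℝ) → Fin m → Fin 3 → ℝ)
    (hℓ : ∀ x j k, ℓ x j k = if s j k then x (a j k) else 1 - x (a j k))
    (p : (Fin n → ℝ) → ℝ)
    (hp : ∀ x, p x = ∑ i : Fin n, (x i)^2 * (1 - x i)^2
      + ∑ j : Fin m, (∑ k : Fin 3, ℓ x j k - 1)^2) :
    ((∃ x, p x = 0) ↔
      ∃ b : Fin n → Bool, ∀ j, ∑ k : Fin 3, ℓ (fun i => if b i then 1 else 0) j k = 1) ∧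
    ((∀ x, 0 < p x) ↔
      ¬ ∃ b : Fin n → Bool, ∀ j, ∑ k : Fin 3, ℓ (fun i => if b i then 1 else 0) j k = 1) := by
  have hnonneg : ∀ x, 0 ≤ p x := by
    intro x
    rw [hp]
    positivity
  have key : (∃ x, p x = 0) ↔
      ∃ b : Fin n → Bool, ∀ j, ∑ k : Fin 3, ℓ (fun i => if b i then 1 else 0) j k = 1 := by
    constructor
    · rintro ⟨x, hx⟩
      rw [hp] at hx
      have h1 : (0:ℝ) ≤ ∑ i : Fin n, (x i)^2 * (1 - x i)^2 := by positivity
      have h2 : (0:ℝ) ≤ ∑ j : Fin m, (∑ k : Fin 3, ℓ x j k - 1)^2 := by positivity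
      have hs1 : ∑ i : Fin n, (x i)^2 * (1 - x i)^2 = 0 := by linarith
      have hs2 : ∑ j : Fin m, (∑ k : Fin 3, ℓ x j k - 1)^2 = 0 := by linarith
      have hterm1 : ∀ i : Fin n, (x i)^2 * (1 - x i)^2 = 0 := by
        intro i
        have := (Finset.sum_eq_zero_iff_of_nonneg (fun i _ => by positivity)).mp hs1 i
          (Finset.mem_univ i)
        exact this
      have hterm2 : ∀ j : Fin m, ∑ k : Fin 3, ℓ x j k = 1 := by
        intro j
        have := (Finset.sum_eq_zero_iff_of_nonneg (fun j _ => sq_nonneg _)).mp hs2 j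
          (Finset.mem_univ j)
        have := pow_eq_zero_iff (n := 2) (by norm_num) |>.mp this
        linarith
      have hx01 : ∀ i, x i = 0 ∨ x i = 1 := by
        intro i
        have := hterm1 i
        rcases mul_eq_zero.mp this with h | h
        · left; exact pow_eq_zero_iff (n := 2) (by norm_num) |>.mp h
        · right
          have := pow_eq_zero_iff (n := 2) (by norm_num) |>.mp h
          linarith
      refine ⟨fun i => decide (x i = 1), ?_⟩
      have hxeq : (fun i => if decide (x i = 1) then (1:ℝ) else 0) = x := by
        funext i
        rcases hx01 i with h | h <;> simp [h]
      intro j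
      rw [hxeq]
      exact hterm2 j
    · rintro ⟨b, hb⟩
      refine ⟨fun i => if b i then 1 else 0, ?_⟩
      rw [hp]
      have h1 : ∑ i : Fin n, ((if b i then (1:ℝ) else 0))^2 * (1 - (if b i then (1:ℝ) else 0))^2 = 0 := by
        apply Finset.sum_eq_zero
        intro i _
        cases b i <;> simp
      have h2 : ∑ j : Fin m, (∑ k : Fin 3, ℓ (fun i => if b i then (1:ℝ) else 0) j k - 1)^2 = 0 := by
        apply Finset.sum_eq_zero
        intro j _
        rw [hb j]; ring
      rw [h1, h2]; ring
  refine ⟨key, ?_⟩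
  rw [← key]
  constructor
  · rintro h ⟨x, hx⟩
    exact absurd hx (ne_of_gt (h x))
  · intro h x
    rcases lt_or_eq_of_le (hnonneg x) with h' | h'
    · exact h'
    · exact absurd ⟨x, h'.symm⟩ h
end

section
/- Let n, m be positive integers, a : Fin m → Fin 3 → Fin n, s : Fin m → Fin 3 → Bool, and define p(x) = Σ_{i=1}^{n} x_i²(1 − x_i)² + Σ_{j=1}^{m} (ℓ_{j,1}(x) + ℓ_{j,2}(x) + ℓ_{j,3}(x) − 1)², where ℓ_{j,k}(x) = x_{a(j,k)} if s(j,k) is true and ℓ_{j,k}(x) = 1 − x_{a(j,k)} otherwise. Define the homogenization p_h : ℝⁿ × ℝ → ℝ by p_h(x,y) = Σ_{i=1}^{n} x_i²(y − x_i)² + Σ_{j=1}^{m} y²·(L_{j,1}(x,y) + L_{j,2}(x,y) + L_{j,3}(x,y) − y)², where L_{j,k}(x,y) = x_{a(j,k)} if s(j,k) is true and L_{j,k}(x,y) = y − x_{a(j,k)} otherwise. Then p_h is a quartic form, p_h(x,0) = Σ_{i=1}^{n} x_i⁴, and p_h(x,y) > 0 for all (x,y) ≠ (0,0) if and only if p(x)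 > 0 for all x ∈ ℝⁿ. -/
/-- With `p` the quartic polynomial built from a ONE-IN-THREE 3SAT instance
and `p_h(x,y) = Σᵢ xᵢ²(y−xᵢ)² + Σⱼ y²(L_{j,1}+L_{j,2}+L_{j,3}−y)²` its degree-4
homogenization, `p_h` is a quartic form, `p_h(x,0) = Σᵢ xᵢ⁴`, and `p_h` is positive definite
iff `p` is positive everywhere. -/
theorem homogenization_of_sat_quartic_preserves_positivity
    (n m : ℕ) (hn : 0 < n) (hm : 0 < m)
    (a : Fin m → Fin 3 → Fin n) (s : Fin m → Fin 3 → Bool)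
    (ℓ : (Fin n → ℝ) → Fin m → Fin 3 → ℝ)
    (hℓ : ∀ x j k, ℓ x j k = if s j k then x (a j k) else 1 - x (a j k))
    (p : (Fin n → ℝ) → ℝ)
    (hp : ∀ x, p x = ∑ i : Fin n, (x i)^2 * (1 - x i)^2
      + ∑ j : Fin m, (∑ k : Fin 3, ℓ x j k - 1)^2)
    (L : (Fin n → ℝ) → ℝ → Fin m → Fin 3 → ℝ)
    (hL : ∀ x y j k, L x y j k = if s j k then x (a j k) else y - x (a j k))
    (ph : (Fin n → ℝ) → ℝ → ℝ)
    (hph : ∀ x y, ph x y = ∑ i : Fin n, (x i)^2 * (y - x i)^2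
      + ∑ j : Fin m, y^2 * (∑ k : Fin 3, L x y j k - y)^2) :
    (∀ (c : ℝ) (x : Fin n → ℝ) (y : ℝ), ph (c • x) (c * y) = c^4 * ph x y) ∧
    (∀ x : Fin n → ℝ, ph x 0 = ∑ i : Fin n, (x i)^4) ∧
    ((∀ (x : Fin n → ℝ) (y : ℝ), (x, y) ≠ (0, 0) → 0 < ph x y) ↔ (∀ x, 0 < p x)) := by

  have hLscale : ∀ (c : ℝ) x y j k, L (c • x) (c * y) j k = c * L x y j k := by
    intro c x y j k
    rw [hL, hL]
    cases s j k <;> simp [Pi.smul_apply, smul_eq_mul] <;> ring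
  have h1 : ∀ (c : ℝ) (x : Fin n → ℝ) (y : ℝ), ph (c • x) (c * y) = c^4 * ph x y := by
    intro c x y
    rw [hph, hph]
    have hsum : ∀ j : Fin m, ∑ k : Fin 3, L (c • x) (c * y) j k = c * ∑ k : Fin 3, L x y j k := by
      intro j
      rw [Finset.mul_sum]
      exact Finset.sum_congr rfl fun k _ => hLscale c x y j k
    rw [mul_add, Finset.mul_sum, Finset.mul_sum]
    congr 1
    · exact Finset.sum_congr rfl fun i _ => by simp only [Pi.smul_apply, smul_eq_mul]; ring
    · exact Finset.sum_congr rfl fun j _ => by rw [hsum]; ring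
  have h2 : ∀ x : Fin n → ℝ, ph x 0 = ∑ i : Fin n, (x i)^4 := by
    intro x
    rw [hph]
    have : ∀ j : Fin m, (0:ℝ)^2 * (∑ k : Fin 3, L x 0 j k - 0)^2 = 0 := by
      intro j; ring
    rw [Finset.sum_congr rfl fun j _ => this j, Finset.sum_const_zero, add_zero]
    exact Finset.sum_congr rfl fun i _ => by ring
  refine ⟨h1, h2, ?_⟩
  have hkey : ∀ x, ph x 1 = p x := by
    intro x
    rw [hph, hp]
    congr 1
    · exact Finset.sum_congr rfl fun j _ => by
        have : ∀ k : Fin 3, L x 1 j k = ℓ x j k := by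
          intro k; rw [hL, hℓ]
        rw [Finset.sum_congr rfl fun k _ => this k]; ring
  constructor
  · intro h x
    rw [← hkey]
    exact h x 1 (by simp)
  · intro h x y hxy
    rcases eq_or_ne y 0 with rfl | hy
    · have hx : x ≠ 0 := fun h0 => hxy (by simp [h0])
      obtain ⟨i, hi⟩ := Function.ne_iff.mp hx
      have hi' : x i ≠ 0 := by simpa using hi
      rw [h2 x]
      refine Finset.sum_pos' (fun i _ => by positivity) ⟨i, Finset.mem_univ i, by positivity⟩

    · have heq := h1 y (y⁻¹ • x) 1
      have hx : y • (y⁻¹ • x) = x := by rw [smul_smul, mul_inv_cancel₀ hy, one_smul]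
      rw [hx, mul_one, hkey] at heq
      rw [heq]
      have hpx := h (y⁻¹ • x)
      positivity
end

section
/- The sextic form V(x₁,x₂,x₃) = x₁⁴x₂² + x₁²x₂⁴ − 3x₁²x₂²x₃² + x₃⁶ + (1/250)·(x₁² + x₂² + x₃²)³ is not a sum of squares: there exists no finite family of polynomials q₁, …, q_m ∈ ℝ[x₁,x₂,x₃] with V = q₁² + ⋯ + q_m². -/
/-!
If `V = ∑ qᵢ²`, comparing homogeneous components of top degree shows that every `qᵢ` has degree
at most `3` (the top components of the `qᵢ²` are squares and cannot cancel). A linear functional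
`L` reading ten sextic coefficients then separates `V` from such sums: for a cubic `q`, `L (q²)`
is a positive semidefinite quadratic form in the coefficients of `q`, written below explicitly as
a sum of squares, whereas `L V = -29/1250`.
-/

open MvPolynomial Finset

namespace MvPolynomial

variable {σ R : Type*}

section CommSemiring

variable [CommSemiring R]

theorem homogeneousComponent_mul_of_totalDegree_le {p q : MvPolynomial σ R} {m n : ℕ}
    (hp : p.totalDegree ≤ m) (hq : q.totalDegree ≤ n) :
    homogeneousComponent (m + n) (p * q) =
      homogeneousComponent m p * homogeneousComponent n q := by
  classical
  ext d
  rw [coeff_homogeneousComponent, coeff_mul, coeff_mul]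
  split_ifs with hd
  · refine sum_congr rfl fun x hx => ?_
    have hdeg : x.1.degree + x.2.degree = m + n := by
      rw [← map_add, mem_antidiagonal.mp hx, hd]
    simp only [coeff_homogeneousComponent]
    split_ifs with h₁ h₂ h₂
    · rfl
    · omega
    · omega
    · obtain h | h : m < x.1.degree ∨ n < x.2.degree := by omega
      · rw [coeff_eq_zero_of_totalDegree_lt (hp.trans_lt h), zero_mul, zero_mul]
      · rw [coeff_eq_zero_of_totalDegree_lt (hq.trans_lt h), mul_zero, mul_zero]
  · refine (sum_eq_zero fun x hx => ?_).symm
    have hdeg : x.1.degree + x.2.degree = d.degree := by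
      rw [← map_add, mem_antidiagonal.mp hx]
    simp only [coeff_homogeneousComponent]
    split_ifs <;> first | omega | simp

theorem totalDegree_le_of_homogeneousComponent_eq_zero {p : MvPolynomial σ R} {n : ℕ}
    (hp : p.totalDegree ≤ n + 1) (h : homogeneousComponent (n + 1) p = 0) :
    p.totalDegree ≤ n := by
  refine Finset.sup_le fun m hm => ?_
  have hle : m.degree ≤ n + 1 := (le_totalDegree hm).trans hp
  have hne : m.degree ≠ n + 1 := fun hdeg => by
    have hcoeff := congrArg (coeff m) h
    rw [coeff_homogeneousComponent, if_pos hdeg, coeff_zero] at hcoeff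
    exact mem_support_iff.mp hm hcoeff
  exact Nat.le_of_lt_succ (lt_of_le_of_ne hle hne)

end CommSemiring

section OrderedField

variable [Field R] [LinearOrder R] [IsStrictOrderedRing R] {ι : Type*} {s : Finset ι}
  {q : ι → MvPolynomial σ R}

theorem eq_zero_of_sum_sq_eq_zero (h : ∑ i ∈ s, q i ^ 2 = 0) : ∀ i ∈ s, q i = 0 := by
  intro i hi
  refine MvPolynomial.funext fun x => ?_
  have hx : ∑ j ∈ s, eval x (q j) * eval x (q j) = 0 := by
    simpa [sq] using congrArg (eval x) h
  simpa using (sum_mul_self_eq_zero_iff s _).mp hx i hi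

theorem totalDegree_le_of_totalDegree_sum_sq_le {d : ℕ}
    (h : (∑ i ∈ s, q i ^ 2).totalDegree ≤ 2 * d) : ∀ i ∈ s, (q i).totalDegree ≤ d := by
  suffices descend : ∀ n, (∀ i ∈ s, (q i).totalDegree ≤ d + n) → ∀ i ∈ s, (q i).totalDegree ≤ d from
    descend _ fun i hi => (le_sup (f := fun i => (q i).totalDegree) hi).trans (Nat.le_add_left _ _)
  intro n
  induction n with
  | zero => exact id
  | succ n ih =>
    intro (hn : ∀ i ∈ s, (q i).totalDegree ≤ d + n + 1)
    refine ih fun i hi => totalDegree_le_of_homogeneousComponent_eq_zero (hn i hi) ?_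
    refine eq_zero_of_sum_sq_eq_zero (q := fun j => homogeneousComponent (d + n + 1) (q j)) ?_ i hi
    have htop : homogeneousComponent (d + n + 1 + (d + n + 1)) (∑ i ∈ s, q i ^ 2) = 0 :=
      homogeneousComponent_eq_zero _ _ (by omega)
    rwa [map_sum, sum_congr rfl fun j hj => by
      rw [sq, homogeneousComponent_mul_of_totalDegree_le (hn j hj) (hn j hj), ← sq]] at htop

end OrderedField

end MvPolynomial

noncomputable def ofTriple (t : ℕ × ℕ × ℕ) : Fin 3 →₀ ℕ :=
  Finsupp.equivFunOnFinite.symm ![t.1, t.2.1, t.2.2]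

@[simp] theorem ofTriple_apply_zero (t : ℕ × ℕ × ℕ) : ofTriple t 0 = t.1 := rfl
@[simp] theorem ofTriple_apply_one (t : ℕ × ℕ × ℕ) : ofTriple t 1 = t.2.1 := rfl
@[simp] theorem ofTriple_apply_two (t : ℕ × ℕ × ℕ) : ofTriple t 2 = t.2.2 := rfl

theorem ofTriple_eta (m : Fin 3 →₀ ℕ) : ofTriple (m 0, m 1, m 2) = m := by
  ext i; fin_cases i <;> rfl

theorem ofTriple_injective : Function.Injective ofTriple :=
  Function.LeftInverse.injective (g := fun m => (m 0, m 1, m 2)) fun _ => rfl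

theorem degree_ofTriple (t : ℕ × ℕ × ℕ) : (ofTriple t).degree = t.1 + t.2.1 + t.2.2 := by
  rw [Finsupp.degree_eq_sum, Fin.sum_univ_three]; rfl

theorem coeff_ofTriple_mul {R : Type*} [CommSemiring R] (p q : MvPolynomial (Fin 3) R)
    (a b c : ℕ) :
    coeff (ofTriple (a, b, c)) (p * q) =
      ∑ i ∈ range (a + 1), ∑ j ∈ range (b + 1), ∑ k ∈ range (c + 1),
        coeff (ofTriple (i, j, k)) p * coeff (ofTriple (a - i, b - j, c - k)) q := by
  simp_rw [← sum_product', coeff_mul]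
  have hcomp {x : (Fin 3 →₀ ℕ) × (Fin 3 →₀ ℕ)} (hx : x ∈ antidiagonal (ofTriple (a, b, c))) :
      x.1 0 + x.2 0 = a ∧ x.1 1 + x.2 1 = b ∧ x.1 2 + x.2 2 = c := by
    simp only [← Finsupp.add_apply, HasAntidiagonal.mem_antidiagonal.mp hx]
    simp
  have hinv {x : (Fin 3 →₀ ℕ) × (Fin 3 →₀ ℕ)} (hx : x ∈ antidiagonal (ofTriple (a, b, c))) :
      ofTriple (x.1 0, x.1 1, x.1 2) = x.1 ∧ ofTriple (a - x.1 0, b - x.1 1, c - x.1 2) = x.2 := by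
    have := hcomp hx
    refine ⟨ofTriple_eta _, ?_⟩
    ext i; fin_cases i <;> simp <;> omega
  refine sum_nbij' (fun x => (x.1 0, x.1 1, x.1 2))
    (fun t => (ofTriple t, ofTriple (a - t.1, b - t.2.1, c - t.2.2))) ?_ ?_ ?_ ?_ ?_
  · intro x hx
    simp only [mem_product, mem_range]
    have := hcomp hx
    omega
  · intro t ht
    simp only [mem_product, mem_range] at ht
    rw [HasAntidiagonal.mem_antidiagonal]
    ext i; fin_cases i <;> simp <;> omega
  · intro x hx
    exact Prod.ext (hinv hx).1 (hinv hx).2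
  · intro t _
    simp
  · intro x hx
    rw [(hinv hx).1, (hinv hx).2]

theorem monomial_ofTriple {R : Type*} [CommSemiring R] (a b c : ℕ) (r : R) :
    monomial (ofTriple (a, b, c)) r = C r * X 0 ^ a * X 1 ^ b * X 2 ^ c := by
  rw [monomial_eq, Finsupp.prod_fintype _ _ fun _ => pow_zero _, Fin.prod_univ_three]
  simp [ofTriple, mul_assoc]

/-- The weights are a rational point of the dual of the Gram-matrix semidefinite program
for `perturbedMotzkin`. -/
noncomputable def motzkinSeparator : MvPolynomial (Fin 3) ℝ →ₗ[ℝ] ℝ :=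
  (28 : ℝ) • (lcoeff ℝ (ofTriple (6, 0, 0)) + lcoeff ℝ (ofTriple (0, 6, 0)))
    + lcoeff ℝ (ofTriple (0, 0, 6))
    + (4 / 5 : ℝ) • (lcoeff ℝ (ofTriple (4, 2, 0)) + lcoeff ℝ (ofTriple (2, 4, 0)))
    + (3 : ℝ) • (lcoeff ℝ (ofTriple (4, 0, 2)) + lcoeff ℝ (ofTriple (0, 4, 2)))
    + (7 / 5 : ℝ) • (lcoeff ℝ (ofTriple (2, 0, 4)) + lcoeff ℝ (ofTriple (0, 2, 4)))
    + lcoeff ℝ (ofTriple (2, 2, 2))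

theorem motzkinSeparator_mul_self_nonneg {q : MvPolynomial (Fin 3) ℝ} (hq : q.totalDegree ≤ 3) :
    0 ≤ motzkinSeparator (q * q) := by
  obtain ⟨c, hc⟩ : ∃ c : ℕ × ℕ × ℕ → ℝ, ∀ t, coeff (ofTriple t) q = c t := ⟨_, fun _ => rfl⟩
  have hvanish : ∀ t : ℕ × ℕ × ℕ, 3 < t.1 + t.2.1 + t.2.2 → c t = 0 := fun t ht => by
    rw [← hc, coeff_eq_zero_of_totalDegree_lt]
    exact hq.trans_lt (show 3 < (ofTriple t).degree by rwa [degree_ofTriple])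
  have key : motzkinSeparator (q * q) =
      28 * (c (3, 0, 0) + 1 / 35 * c (1, 2, 0) + 3 / 28 * c (1, 0, 2)) ^ 2
        + 136 / 175 * (c (1, 2, 0) + 20 / 17 * c (1, 0, 2)) ^ 2 + 1 / 340 * c (1, 0, 2) ^ 2
      + 28 * (c (0, 3, 0) + 1 / 35 * c (2, 1, 0) + 3 / 28 * c (0, 1, 2)) ^ 2
        + 136 / 175 * (c (2, 1, 0) + 20 / 17 * c (0, 1, 2)) ^ 2 + 1 / 340 * c (0, 1, 2) ^ 2
      + (c (0, 0, 3) + 7 / 5 * c (2, 0, 1) + 7 / 5 * c (0, 2, 1)) ^ 2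
        + 26 / 25 * (c (2, 0, 1) - 12 / 13 * c (0, 2, 1)) ^ 2 + 2 / 13 * c (0, 2, 1) ^ 2
      + c (1, 1, 1) ^ 2 := by
    simp only [motzkinSeparator, LinearMap.add_apply, LinearMap.smul_apply, lcoeff_apply,
      coeff_ofTriple_mul, sum_range_succ, sum_range_zero, hc]
    simp (disch := decide) only [hvanish, Nat.reduceSub]
    ring
  rw [key]
  positivity

noncomputable def perturbedMotzkin : MvPolynomial (Fin 3) ℝ :=
  X 0 ^ 4 * X 1 ^ 2 + X 0 ^ 2 * X 1 ^ 4
      - 3 * (X 0 ^ 2 * X 1 ^ 2 * X 2 ^ 2) + X 2 ^ 6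
      + C (1/250) * (X 0 ^ 2 + X 1 ^ 2 + X 2 ^ 2) ^ 3

theorem perturbedMotzkin_eq_sum_monomial : perturbedMotzkin =
    monomial (ofTriple (4, 2, 0)) 1 + monomial (ofTriple (2, 4, 0)) 1
      - monomial (ofTriple (2, 2, 2)) 3 + monomial (ofTriple (0, 0, 6)) 1
      + C (1 / 250) * (monomial (ofTriple (6, 0, 0)) 1 + monomial (ofTriple (0, 6, 0)) 1
        + monomial (ofTriple (0, 0, 6)) 1 + monomial (ofTriple (4, 2, 0)) 3
        + monomial (ofTriple (2, 4, 0)) 3 + monomial (ofTriple (4, 0, 2)) 3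
        + monomial (ofTriple (0, 4, 2)) 3 + monomial (ofTriple (2, 0, 4)) 3
        + monomial (ofTriple (0, 2, 4)) 3 + monomial (ofTriple (2, 2, 2)) 6) := by
  simp only [perturbedMotzkin, monomial_ofTriple, map_one, map_ofNat]
  ring

theorem isHomogeneous_perturbedMotzkin : perturbedMotzkin.IsHomogeneous 6 := by
  rw [perturbedMotzkin_eq_sum_monomial]
  apply_rules [IsHomogeneous.add, IsHomogeneous.sub, IsHomogeneous.C_mul, isHomogeneous_monomial]
    <;> simp [degree_ofTriple]

/-- On the Motzkin form itself the separator is `-2/5`, on `(x₀² + x₁² + x₂²)³` it is `471/5`;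
so it rules out every perturbation by `ε (x₀² + x₁² + x₂²)³` with `ε < 2/471`. -/
theorem motzkinSeparator_perturbedMotzkin : motzkinSeparator perturbedMotzkin = -29 / 1250 := by
  simp only [perturbedMotzkin_eq_sum_monomial, motzkinSeparator, LinearMap.add_apply,
    LinearMap.smul_apply, lcoeff_apply, coeff_add, coeff_sub, coeff_C_mul, coeff_monomial,
    ofTriple_injective.eq_iff]
  norm_num

/-- The perturbed Motzkin form
`V = x₁⁴x₂² + x₁²x₂⁴ − 3x₁²x₂²x₃² + x₃⁶ + (1/250)(x₁² + x₂² + x₃²)³`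
is not a sum of squares of polynomials. -/
theorem perturbed_motzkin_not_sum_of_squares
    (V : MvPolynomial (Fin 3) ℝ)
    (hV : V = X 0 ^ 4 * X 1 ^ 2 + X 0 ^ 2 * X 1 ^ 4
      - 3 * (X 0 ^ 2 * X 1 ^ 2 * X 2 ^ 2) + X 2 ^ 6
      + C (1/250) * (X 0 ^ 2 + X 1 ^ 2 + X 2 ^ 2) ^ 3) :
    ¬ ∃ (k : ℕ) (q : Fin k → MvPolynomial (Fin 3) ℝ), V = ∑ i : Fin k, (q i) ^ 2 := by
  rintro ⟨k, q, hq⟩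
  subst hV
  change perturbedMotzkin = _ at hq
  have hcubic (i : Fin k) : (q i).totalDegree ≤ 3 :=
    totalDegree_le_of_totalDegree_sum_sq_le (hq ▸ isHomogeneous_perturbedMotzkin.totalDegree_le)
      i (mem_univ i)
  have hsplit : motzkinSeparator perturbedMotzkin = ∑ i, motzkinSeparator (q i * q i) := by
    simp only [hq, map_sum, sq]
  have hnonneg : 0 ≤ motzkinSeparator perturbedMotzkin :=
    hsplit ▸ sum_nonneg fun i _ => motzkinSeparator_mul_self_nonneg (hcubic i)
  rw [motzkinSeparator_perturbedMotzkin] at hnonneg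
  norm_num at hnonneg
end
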